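/- arXiv:1105.1470 — 10 statements merged into one kernel-verified Lean document; each statement's English description precedes it below -/
import Mathlib

section
/- If a GDD(n,2,6;λ₁,λ₂) exists with b blocks and replication number r, then b ≥ 2r − λ₁ and b ≥ 2r − λ₂. -/
/-- A group divisible design with two groups of size `n` (the points are
`Fin 2 × Fin n`, the first coordinate indicating the group), blocks of size `k`,
each point lying in `rep` blocks, every pair of distinct points in the same
group lying in exactly `l1` blocks, and every pair of points in different
groups lying in exactly `l2` blocks. -/
structure GDD (n k l1 l2 : ℕ) where
  blocks : Multiset (Finset (Fin 2 × Fin n))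
  blockCard : ∀ B ∈ blocks, B.card = k
  rep : ℕ
  pointRep : ∀ x : Fin 2 × Fin n,
    (blocks.filter fun B => x ∈ B).card = rep
  samePairs : ∀ x y : Fin 2 × Fin n, x ≠ y → x.1 = y.1 →
    (blocks.filter fun B => x ∈ B ∧ y ∈ B).card = l1
  crossPairs : ∀ x y : Fin 2 × Fin n, x.1 ≠ y.1 →
    (blocks.filter fun B => x ∈ B ∧ y ∈ B).card = l2

/-- The design has fixed block configuration `(s,t)`: every block meets one
group in exactly `s` points and the other group in exactly `t` points. -/
def GDD.HasConfig {n k l1 l2 : ℕ} (D : GDD n k l1 l2) (s t : ℕ) : Prop :=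
  ∀ B ∈ D.blocks,
    ((B.filter fun p => p.1 = 0).card = s ∧ (B.filter fun p => p.1 = 1).card = t) ∨
    ((B.filter fun p => p.1 = 0).card = t ∧ (B.filter fun p => p.1 = 1).card = s)

theorem stmt_2 (n l1 l2 : ℕ) (hn : 1 ≤ n) (D : GDD n 6 l1 l2) :
    D.blocks.card ≥ 2 * D.rep - l1 ∧ D.blocks.card ≥ 2 * D.rep - l2 := by
  have key : ∀ (x y : Fin 2 × Fin n) (l : ℕ),
      (D.blocks.filter fun B => x ∈ B ∧ y ∈ B).card = l →
      D.blocks.card ≥ 2 * D.rep - l := by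
    intro x y l hl
    have h := Multiset.filter_add_filter (fun B => x ∈ B) (fun B => y ∈ B) D.blocks
    have hc := congrArg Multiset.card h
    simp only [Multiset.card_add, D.pointRep, hl] at hc
    have hle : (D.blocks.filter fun B => x ∈ B ∨ y ∈ B).card ≤ D.blocks.card :=
      Multiset.card_le_card (Multiset.filter_le _ _)
    omega
  rcases Nat.lt_or_ge n 2 with h2 | h2
  · -- n = 1 : blocks must be empty
    interval_cases n
    have hb : D.blocks = 0 := by
      rcases D.blocks.empty_or_exists_mem with h | ⟨B, hB⟩
      · exact h
      · exfalso
        have h6 := D.blockCard B hB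
        have : B.card ≤ Fintype.card (Fin 2 × Fin 1) := Finset.card_le_univ B
        simp at this
        omega
    have hr : D.rep = 0 := by
      have := D.pointRep ⟨0, 0⟩
      rw [hb] at this
      simpa using this.symm
    simp [hb, hr]
  · constructor
    · have hy : ((⟨0, ⟨0, by omega⟩⟩ : Fin 2 × Fin n)) ≠ ⟨0, ⟨1, by omega⟩⟩ := by
        simp [Prod.ext_iff, Fin.ext_iff]
      exact key _ _ l1 (D.samePairs _ _ hy rfl)
    · have hx : ((⟨0, ⟨0, by omega⟩⟩ : Fin 2 × Fin n)).1 ≠ ((⟨1, ⟨0, by omega⟩⟩ : Fin 2 × Fin n)).1 := by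
        simp
      exact key _ _ l2 (D.crossPairs _ _ hx)
end

section
/- If a GDD(n,2,6;λ₁,λ₂) exists with n ≥ 1, then λ₂ ≤ 2λ₁(n−1)/n, i.e., n·λ₂ ≤ 2λ₁(n−1). -/
lemma sum_card_filter_eq {α β : Type*} (S : Finset α) (M : Multiset β)
    (P : α → β → Prop) [∀ a b, Decidable (P a b)] :
    ∑ x ∈ S, (M.filter (fun b => P x b)).card
      = (M.map fun b => (S.filter fun x => P x b).card).sum := by
  induction M using Multiset.induction with
  | empty => simp
  | cons c M ih =>
    simp only [Multiset.filter_cons, Multiset.map_cons, Multiset.sum_cons,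
      Multiset.card_add, Finset.sum_add_distrib, ih]
    congr 1
    rw [Finset.card_filter]
    apply Finset.sum_congr rfl
    intro x _
    by_cases h : P x c <;> simp [h]

theorem stmt_3 (n l1 l2 : ℕ) (hn : 1 ≤ n) (D : GDD n 6 l1 l2) :
    n * l2 ≤ 2 * l1 * (n - 1) := by
  classical
  obtain ⟨m, rfl⟩ : ∃ m, n = m + 1 := ⟨n - 1, by omega⟩
  set A : Finset (Fin 2 × Fin (m+1)) := Finset.univ.filter (fun p => p.1 = 0) with hAdef
  set B1 : Finset (Fin 2 × Fin (m+1)) := Finset.univ.filter (fun p => p.1 = 1) with hBdef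
  have hAcard : A.card = m + 1 := by
    have : A = ({0} : Finset (Fin 2)) ×ˢ (Finset.univ : Finset (Fin (m+1))) := by
      ext p; simp [hAdef, Finset.mem_product, Prod.ext_iff, eq_comm]
    rw [this, Finset.card_product]; simp
  have hBcard : B1.card = m + 1 := by
    have : B1 = ({1} : Finset (Fin 2)) ×ˢ (Finset.univ : Finset (Fin (m+1))) := by
      ext p; simp [hBdef, Finset.mem_product, Prod.ext_iff, eq_comm]
    rw [this, Finset.card_product]; simp
  -- a, b functions
  set a : Finset (Fin 2 × Fin (m+1)) → ℕ := fun Bl => (A.filter (· ∈ Bl)).card with hadef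
  set b : Finset (Fin 2 × Fin (m+1)) → ℕ := fun Bl => (B1.filter (· ∈ Bl)).card with hbdef
  have hab : ∀ Bl ∈ D.blocks, a Bl + b Bl = 6 := by
    intro Bl hBl
    have h0 : A.filter (· ∈ Bl) = Bl.filter (fun p => p.1 = 0) := by
      ext p; simp [hAdef]; tauto
    have h1 : B1.filter (· ∈ Bl) = Bl.filter (fun p => p.1 = 1) := by
      ext p; simp [hBdef]; tauto
    have h2 : Bl.filter (fun p => p.1 = 1) = Bl.filter (fun p => ¬ p.1 = 0) := by
      apply Finset.filter_congr
      intro p _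
      have : ∀ x : Fin 2, x = 1 ↔ ¬ x = 0 := by decide
      exact this p.1
    have := Finset.card_filter_add_card_filter_not
      (s := Bl) (p := fun p => p.1 = 0)
    simp only [hadef, hbdef, h0, h1, h2]
    rw [this, D.blockCard Bl hBl]
  -- cross count
  have e1 : (m+1) * (m+1) * l2 = (D.blocks.map fun Bl => a Bl * b Bl).sum := by
    have step : ∑ p ∈ A ×ˢ B1, (D.blocks.filter (fun Bl => p.1 ∈ Bl ∧ p.2 ∈ Bl)).card
        = (D.blocks.map fun Bl => ((A ×ˢ B1).filter fun p => p.1 ∈ Bl ∧ p.2 ∈ Bl).card).sum :=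
      sum_card_filter_eq _ _ _
    have lhs : ∑ p ∈ A ×ˢ B1, (D.blocks.filter (fun Bl => p.1 ∈ Bl ∧ p.2 ∈ Bl)).card
        = (m+1) * (m+1) * l2 := by
      rw [Finset.sum_congr rfl (fun p hp => ?_), Finset.sum_const, Finset.card_product,
        hAcard, hBcard, smul_eq_mul]
      obtain ⟨h1, h2⟩ := Finset.mem_product.mp hp
      apply D.crossPairs
      simp only [hAdef, Finset.mem_filter] at h1
      simp only [hBdef, Finset.mem_filter] at h2
      rw [h1.2, h2.2]; decide
    rw [← lhs, step]
    congr 1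
    apply Multiset.map_congr rfl
    intro Bl _
    rw [Finset.filter_product, Finset.card_product]
  -- same-group counts
  have same : ∀ (G : Finset (Fin 2 × Fin (m+1))) (i : Fin 2),
      (∀ p ∈ G, p.1 = i) → G.card = m + 1 →
      (m+1) * (m+1) - (m+1) = ((m+1) * (m+1) - (m+1)) → True := fun _ _ _ _ _ => trivial
  have e2gen : ∀ (G : Finset (Fin 2 × Fin (m+1))) (i : Fin 2),
      (∀ p ∈ G, p.1 = i) → G.card = m + 1 →
      ((m+1) * (m+1) - (m+1)) * l1
        = (D.blocks.map fun Bl => (G.filter (· ∈ Bl)).card * (G.filter (· ∈ Bl)).card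
            - (G.filter (· ∈ Bl)).card).sum := by
    intro G i hG hGcard
    have step : ∑ p ∈ G.offDiag, (D.blocks.filter (fun Bl => p.1 ∈ Bl ∧ p.2 ∈ Bl)).card
        = (D.blocks.map fun Bl => (G.offDiag.filter fun p => p.1 ∈ Bl ∧ p.2 ∈ Bl).card).sum :=
      sum_card_filter_eq _ _ _
    have lhs : ∑ p ∈ G.offDiag, (D.blocks.filter (fun Bl => p.1 ∈ Bl ∧ p.2 ∈ Bl)).card
        = ((m+1) * (m+1) - (m+1)) * l1 := by
      rw [Finset.sum_congr rfl (fun p hp => ?_), Finset.sum_const, Finset.offDiag_card,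
        hGcard, smul_eq_mul]
      obtain ⟨h1, h2, h3⟩ := Finset.mem_offDiag.mp hp
      exact D.samePairs p.1 p.2 h3 (by rw [hG _ h1, hG _ h2])
    rw [← lhs, step]
    congr 1
    apply Multiset.map_congr rfl
    intro Bl _
    have : G.offDiag.filter (fun p => p.1 ∈ Bl ∧ p.2 ∈ Bl) = (G.filter (· ∈ Bl)).offDiag := by
      ext p
      simp only [Finset.mem_filter, Finset.mem_offDiag]
      tauto
    rw [this, Finset.offDiag_card, Finset.card_filter]
  have e2 : ((m+1) * (m+1) - (m+1)) * l1
      = (D.blocks.map fun Bl => a Bl * a Bl - a Bl).sum := by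
    apply e2gen A 0 _ hAcard
    intro p hp; simpa [hAdef] using hp
  have e3 : ((m+1) * (m+1) - (m+1)) * l1
      = (D.blocks.map fun Bl => b Bl * b Bl - b Bl).sum := by
    apply e2gen B1 1 _ hBcard
    intro p hp; simpa [hBdef] using hp
  -- pointwise inequality
  have key : (D.blocks.map fun Bl => a Bl * b Bl).sum
      ≤ (D.blocks.map fun Bl => (a Bl * a Bl - a Bl) + (b Bl * b Bl - b Bl)).sum := by
    apply Multiset.sum_map_le_sum_map
    intro Bl hBl
    have h6 := hab Bl hBl
    have hb6 : b Bl = 6 - a Bl := by omega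
    have ha6 : a Bl ≤ 6 := by omega
    rw [hb6]
    interval_cases (a Bl) <;> decide
  rw [Multiset.sum_map_add] at key
  rw [← e1, ← e2, ← e3] at key
  have hm : (m+1) * (m+1) - (m+1) = (m+1) * m := by
    have h : (m+1) * (m+1) = (m+1) * m + (m+1) := by ring
    omega
  rw [hm] at key
  have final : (m+1) * ((m+1) * l2) ≤ (m+1) * (2 * l1 * m) := by
    calc (m+1) * ((m+1) * l2) = (m+1) * (m+1) * l2 := by ring
    _ ≤ (m+1) * m * l1 + (m+1) * m * l1 := key
    _ = (m+1) * (2 * l1 * m) := by ring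
  have := Nat.le_of_mul_le_mul_left final (by omega)
  simpa using this
end

section
/- For any GDD(n,2,k;λ₁,λ₂) with fixed block configuration (s,t), the second index satisfies λ₂ = (λ₁(n−1)/n) · ((k(k−1) − 2β)/(2β)), where β = C(s,2) + C(t,2); equivalently 2β·n·λ₂ = λ₁(n−1)(k(k−1) − 2β). -/
section Aux
variable {n : ℕ}

private lemma sum_filter_card (m : Multiset (Finset (Fin 2 × Fin n)))
    (Q : (Fin 2 × Fin n) × (Fin 2 × Fin n) → Prop) [DecidablePred Q] :
    ∑ p ∈ Finset.univ.filter Q, (m.filter fun B => p.1 ∈ B ∧ p.2 ∈ B).card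
      = (m.map fun B =>
          (Finset.univ.filter fun p => Q p ∧ p.1 ∈ B ∧ p.2 ∈ B).card).sum := by
  induction m using Multiset.induction with
  | empty => simp
  | cons a s ih =>
    simp only [Multiset.filter_cons, Multiset.map_cons, Multiset.sum_cons,
      Multiset.card_add, Finset.sum_add_distrib, ih]
    congr 1
    have : ((Finset.univ.filter fun p : (Fin 2 × Fin n) × (Fin 2 × Fin n) =>
        Q p ∧ p.1 ∈ a ∧ p.2 ∈ a)).card
        = ∑ p ∈ Finset.univ.filter Q, if p.1 ∈ a ∧ p.2 ∈ a then 1 else 0 := by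
      rw [← Finset.filter_filter, Finset.card_filter]
    rw [this]
    apply Finset.sum_congr rfl
    intro p _
    split <;> simp

private lemma same_card (B : Finset (Fin 2 × Fin n)) :
    (Finset.univ.filter fun p : (Fin 2 × Fin n) × (Fin 2 × Fin n) =>
        (p.1 ≠ p.2 ∧ p.1.1 = p.2.1) ∧ p.1 ∈ B ∧ p.2 ∈ B).card
      = (B.filter fun x => x.1 = 0).card * ((B.filter fun x => x.1 = 0).card - 1)
      + (B.filter fun x => x.1 = 1).card * ((B.filter fun x => x.1 = 1).card - 1) := by
  set B0 := B.filter fun x => x.1 = 0 with hB0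
  set B1 := B.filter fun x => x.1 = 1 with hB1
  have hset : (Finset.univ.filter fun p : (Fin 2 × Fin n) × (Fin 2 × Fin n) =>
      (p.1 ≠ p.2 ∧ p.1.1 = p.2.1) ∧ p.1 ∈ B ∧ p.2 ∈ B) = B0.offDiag ∪ B1.offDiag := by
    ext p
    simp only [Finset.mem_filter, Finset.mem_univ, true_and, Finset.mem_union,
      Finset.mem_offDiag, hB0, hB1]
    constructor
    · rintro ⟨⟨hne, heq⟩, h1, h2⟩
      have : p.1.1 = 0 ∨ p.1.1 = 1 := by omega
      rcases this with h | h
      · left; exact ⟨⟨h1, h⟩, ⟨h2, heq ▸ h⟩, hne⟩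
      · right; exact ⟨⟨h1, h⟩, ⟨h2, heq ▸ h⟩, hne⟩
    · rintro (⟨⟨h1, e1⟩, ⟨h2, e2⟩, hne⟩ | ⟨⟨h1, e1⟩, ⟨h2, e2⟩, hne⟩) <;>
        exact ⟨⟨hne, by rw [e1, e2]⟩, h1, h2⟩
  have hdisj : Disjoint B0.offDiag B1.offDiag := by
    rw [Finset.disjoint_left]
    rintro p hp hq
    rw [Finset.mem_offDiag] at hp hq
    have h0 : p.1.1 = 0 := (Finset.mem_filter.mp hp.1).2
    have h1 : p.1.1 = 1 := (Finset.mem_filter.mp hq.1).2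
    omega
  rw [hset, Finset.card_union_of_disjoint hdisj, Finset.offDiag_card,
    Finset.offDiag_card]
  have h : ∀ a : ℕ, a * a - a = a * (a - 1) := by
    intro a; cases a with
    | zero => simp
    | succ a => rw [Nat.succ_sub_one, Nat.mul_succ, Nat.add_sub_cancel]
  rw [h, h]

private lemma cross_card (B : Finset (Fin 2 × Fin n)) :
    (Finset.univ.filter fun p : (Fin 2 × Fin n) × (Fin 2 × Fin n) =>
        p.1.1 ≠ p.2.1 ∧ p.1 ∈ B ∧ p.2 ∈ B).card
      = 2 * ((B.filter fun x => x.1 = 0).card * (B.filter fun x => x.1 = 1).card) := by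
  set B0 := B.filter fun x => x.1 = 0 with hB0
  set B1 := B.filter fun x => x.1 = 1 with hB1
  have hset : (Finset.univ.filter fun p : (Fin 2 × Fin n) × (Fin 2 × Fin n) =>
      p.1.1 ≠ p.2.1 ∧ p.1 ∈ B ∧ p.2 ∈ B) = B0 ×ˢ B1 ∪ B1 ×ˢ B0 := by
    ext p
    simp only [Finset.mem_filter, Finset.mem_univ, true_and, Finset.mem_union,
      Finset.mem_product, hB0, hB1]
    constructor
    · rintro ⟨hne, h1, h2⟩
      have : (p.1.1 = 0 ∧ p.2.1 = 1) ∨ (p.1.1 = 1 ∧ p.2.1 = 0) := by omega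
      rcases this with ⟨e1, e2⟩ | ⟨e1, e2⟩
      · left; exact ⟨⟨h1, e1⟩, ⟨h2, e2⟩⟩
      · right; exact ⟨⟨h1, e1⟩, ⟨h2, e2⟩⟩
    · rintro (⟨⟨h1, e1⟩, ⟨h2, e2⟩⟩ | ⟨⟨h1, e1⟩, ⟨h2, e2⟩⟩) <;>
        exact ⟨by omega, h1, h2⟩
  have hdisj : Disjoint (B0 ×ˢ B1) (B1 ×ˢ B0) := by
    rw [Finset.disjoint_left]
    rintro p hp hq
    rw [Finset.mem_product] at hp hq
    have h0 : p.1.1 = 0 := (Finset.mem_filter.mp hp.1).2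
    have h1 : p.1.1 = 1 := (Finset.mem_filter.mp hq.1).2
    omega
  rw [hset, Finset.card_union_of_disjoint hdisj, Finset.card_product,
    Finset.card_product]
  ring

private lemma group_card (g : Fin 2) :
    ((Finset.univ : Finset (Fin 2 × Fin n)).filter fun x => x.1 = g).card = n := by
  have : ((Finset.univ : Finset (Fin 2 × Fin n)).filter fun x => x.1 = g)
      = {g} ×ˢ Finset.univ := by
    ext x
    simp only [Finset.mem_filter, Finset.mem_univ, true_and, Finset.mem_product,
      Finset.mem_singleton, and_true]
  rw [this, Finset.card_product]
  simp

private lemma two_choose (m : ℕ) : 2 * Nat.choose m 2 = m * (m - 1) := by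
  rw [Nat.choose_two_right, Nat.mul_div_cancel']
  cases m with
  | zero => simp
  | succ m =>
    simpa [Nat.succ_sub_one, Nat.mul_comm] using (Nat.even_mul_succ_self m).two_dvd

private lemma kk_split (s t : ℕ) :
    (s + t) * (s + t - 1) = s * (s - 1) + t * (t - 1) + 2 * (s * t) := by
  cases s with
  | zero => simp
  | succ s =>
    cases t with
    | zero => simp
    | succ t =>
      have h1 : s + 1 + (t + 1) - 1 = s + t + 1 := by omega
      rw [h1, Nat.succ_sub_one, Nat.succ_sub_one]
      ring

end Aux

theorem stmt_6 (n k l1 l2 s t : ℕ) (hst : s + t = k) (D : GDD n k l1 l2)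
    (hc : D.HasConfig s t) :
    2 * (Nat.choose s 2 + Nat.choose t 2) * n * l2 =
      l1 * (n - 1) * (k * (k - 1) - 2 * (Nat.choose s 2 + Nat.choose t 2)) := by
  classical
  set c : ℕ := Nat.choose s 2 + Nat.choose t 2 with hcdef
  set b : ℕ := Multiset.card D.blocks with hbdef
  -- same-group double count
  have key1 : b * (2 * c) = 2 * (n * (n - 1)) * l1 := by
    have hsum := sum_filter_card D.blocks
      (fun p : (Fin 2 × Fin n) × (Fin 2 × Fin n) => p.1 ≠ p.2 ∧ p.1.1 = p.2.1)
    have hL : ∑ p ∈ Finset.univ.filter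
        (fun p : (Fin 2 × Fin n) × (Fin 2 × Fin n) => p.1 ≠ p.2 ∧ p.1.1 = p.2.1),
        (D.blocks.filter fun B => p.1 ∈ B ∧ p.2 ∈ B).card
        = 2 * (n * (n - 1)) * l1 := by
      have hconst : ∀ p ∈ Finset.univ.filter
          (fun p : (Fin 2 × Fin n) × (Fin 2 × Fin n) => p.1 ≠ p.2 ∧ p.1.1 = p.2.1),
          (D.blocks.filter fun B => p.1 ∈ B ∧ p.2 ∈ B).card = l1 := by
        intro p hp
        rw [Finset.mem_filter] at hp
        exact D.samePairs p.1 p.2 hp.2.1 hp.2.2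
      rw [Finset.sum_congr rfl hconst, Finset.sum_const, smul_eq_mul]
      congr 1
      have h0 : (Finset.univ.filter
          (fun p : (Fin 2 × Fin n) × (Fin 2 × Fin n) => p.1 ≠ p.2 ∧ p.1.1 = p.2.1))
          = Finset.univ.filter (fun p : (Fin 2 × Fin n) × (Fin 2 × Fin n) =>
              (p.1 ≠ p.2 ∧ p.1.1 = p.2.1) ∧ p.1 ∈ (Finset.univ : Finset (Fin 2 × Fin n))
               ∧ p.2 ∈ (Finset.univ : Finset (Fin 2 × Fin n))) := by
        ext p; simp
      rw [h0, same_card, group_card, group_card]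
      ring
    have hR : (D.blocks.map fun B =>
        (Finset.univ.filter fun p : (Fin 2 × Fin n) × (Fin 2 × Fin n) =>
          (p.1 ≠ p.2 ∧ p.1.1 = p.2.1) ∧ p.1 ∈ B ∧ p.2 ∈ B).card).sum
        = b * (2 * c) := by
      have hmap : ∀ B ∈ D.blocks,
          (Finset.univ.filter fun p : (Fin 2 × Fin n) × (Fin 2 × Fin n) =>
            (p.1 ≠ p.2 ∧ p.1.1 = p.2.1) ∧ p.1 ∈ B ∧ p.2 ∈ B).card = 2 * c := by
        intro B hB
        have h2c : 2 * c = s * (s - 1) + t * (t - 1) := by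
          rw [hcdef, Nat.mul_add, two_choose, two_choose]
        rw [same_card, h2c]
        rcases hc B hB with ⟨h1, h2⟩ | ⟨h1, h2⟩ <;> rw [h1, h2] <;> ring
      rw [Multiset.map_congr rfl hmap, Multiset.map_const', Multiset.sum_replicate,
        smul_eq_mul, hbdef]
    rw [hsum, hR] at hL
    omega
  -- cross double count
  have key2 : b * (2 * (s * t)) = 2 * (n * n) * l2 := by
    have hsum := sum_filter_card D.blocks
      (fun p : (Fin 2 × Fin n) × (Fin 2 × Fin n) => p.1.1 ≠ p.2.1)
    have hL : ∑ p ∈ Finset.univ.filter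
        (fun p : (Fin 2 × Fin n) × (Fin 2 × Fin n) => p.1.1 ≠ p.2.1),
        (D.blocks.filter fun B => p.1 ∈ B ∧ p.2 ∈ B).card
        = 2 * (n * n) * l2 := by
      have hconst : ∀ p ∈ Finset.univ.filter
          (fun p : (Fin 2 × Fin n) × (Fin 2 × Fin n) => p.1.1 ≠ p.2.1),
          (D.blocks.filter fun B => p.1 ∈ B ∧ p.2 ∈ B).card = l2 := by
        intro p hp
        rw [Finset.mem_filter] at hp
        exact D.crossPairs p.1 p.2 hp.2
      rw [Finset.sum_congr rfl hconst, Finset.sum_const, smul_eq_mul]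
      congr 1
      have h0 : (Finset.univ.filter
          (fun p : (Fin 2 × Fin n) × (Fin 2 × Fin n) => p.1.1 ≠ p.2.1))
          = Finset.univ.filter (fun p : (Fin 2 × Fin n) × (Fin 2 × Fin n) =>
              p.1.1 ≠ p.2.1 ∧ p.1 ∈ (Finset.univ : Finset (Fin 2 × Fin n))
               ∧ p.2 ∈ (Finset.univ : Finset (Fin 2 × Fin n))) := by
        ext p; simp
      rw [h0, cross_card, group_card, group_card]
    have hR : (D.blocks.map fun B =>
        (Finset.univ.filter fun p : (Fin 2 × Fin n) × (Fin 2 × Fin n) =>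
          p.1.1 ≠ p.2.1 ∧ p.1 ∈ B ∧ p.2 ∈ B).card).sum
        = b * (2 * (s * t)) := by
      have hmap : ∀ B ∈ D.blocks,
          (Finset.univ.filter fun p : (Fin 2 × Fin n) × (Fin 2 × Fin n) =>
            p.1.1 ≠ p.2.1 ∧ p.1 ∈ B ∧ p.2 ∈ B).card = 2 * (s * t) := by
        intro B hB
        rw [cross_card]
        rcases hc B hB with ⟨h1, h2⟩ | ⟨h1, h2⟩ <;> rw [h1, h2] <;> ring
      rw [Multiset.map_congr rfl hmap, Multiset.map_const', Multiset.sum_replicate,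
        smul_eq_mul, hbdef]
    rw [hsum, hR] at hL
    omega
  have hk : k * (k - 1) - 2 * c = 2 * (s * t) := by
    have h2c : 2 * c = s * (s - 1) + t * (t - 1) := by
      rw [hcdef, Nat.mul_add, two_choose, two_choose]
    rw [← hst, kk_split, h2c]
    omega
  rw [hk]
  rcases Nat.eq_zero_or_pos n with hn | hn
  · subst hn; simp
  · apply Nat.eq_of_mul_eq_mul_left hn
    have e1 : n * (2 * c * n * l2) = c * (2 * (n * n) * l2) := by ring
    rw [e1, ← key2]
    have e2 : c * (b * (2 * (s * t))) = s * t * (b * (2 * c)) := by ring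
    rw [e2, key1]
    ring
end

section
/- If there exists a BIBD(n,k,λ) with b blocks and replication number r, then there exists a configuration (k,k) GDD(n,2,2k; λb, r²). -/
/-- A balanced incomplete block design `BIBD(n,k,lam)`: a collection of
`k`-element subsets (blocks) of an `n`-set such that every pair of distinct
points lies in exactly `lam` blocks. -/
structure BIBD (n k lam : ℕ) where
  blocks : Multiset (Finset (Fin n))
  blockCard : ∀ B ∈ blocks, B.card = k
  pairs : ∀ x y : Fin n, x ≠ y →
    (blocks.filter fun B => x ∈ B ∧ y ∈ B).card = lam

/-! Take as blocks all unions `B₁ ∪ B₂` of a block `B₁` of the BIBD placed on the first group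
with a block `B₂` placed on the second. Membership conditions then split over the two factors of
`blocks × blocks`: a point lies in `r * b` blocks, two points of one group in `λ * b`, and two
points of different groups in `r * r`. -/

namespace Multiset

variable {α β : Type*}

theorem filter_product (s : Multiset α) (t : Multiset β) (p : α → Prop) (q : β → Prop)
    [DecidablePred p] [DecidablePred q] :
    (s ×ˢ t).filter (fun z => p z.1 ∧ q z.2) = s.filter p ×ˢ t.filter q := by
  induction s using Multiset.induction_on with
  | empty => simp
  | cons a s ih =>
    by_cases ha : p a <;> simp [cons_product, filter_add, filter_map, ih, ha]

end Multiset

section PairBlock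

variable {α : Type*} [DecidableEq α]

def pairBlock (z : Finset α × Finset α) : Finset (Fin 2 × α) :=
  {0} ×ˢ z.1 ∪ {1} ×ˢ z.2

@[simp] theorem zero_mem_pairBlock {a : α} {z : Finset α × Finset α} :
    ((0 : Fin 2), a) ∈ pairBlock z ↔ a ∈ z.1 := by
  simp [pairBlock]

@[simp] theorem one_mem_pairBlock {a : α} {z : Finset α × Finset α} :
    ((1 : Fin 2), a) ∈ pairBlock z ↔ a ∈ z.2 := by
  simp [pairBlock]

theorem card_filter_fst_eq_zero_pairBlock (z : Finset α × Finset α) :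
    ((pairBlock z).filter fun p => p.1 = 0).card = z.1.card := by
  have : (pairBlock z).filter (fun p => p.1 = 0) = {0} ×ˢ z.1 := by
    ext ⟨i, a⟩; fin_cases i <;> simp [pairBlock]
  simp [this]

theorem card_filter_fst_eq_one_pairBlock (z : Finset α × Finset α) :
    ((pairBlock z).filter fun p => p.1 = 1).card = z.2.card := by
  have : (pairBlock z).filter (fun p => p.1 = 1) = {1} ×ˢ z.2 := by
    ext ⟨i, a⟩; fin_cases i <;> simp [pairBlock]
  simp [this]

theorem card_pairBlock (z : Finset α × Finset α) :
    (pairBlock z).card = z.1.card + z.2.card := by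
  rw [pairBlock, Finset.card_union_of_disjoint]
  · simp
  · simp [Finset.disjoint_left]

theorem card_filter_map_pairBlock_product (s t : Multiset (Finset α))
    (P : Finset (Fin 2 × α) → Prop) [DecidablePred P] (p q : Finset α → Prop)
    [DecidablePred p] [DecidablePred q] (hP : ∀ z, P (pairBlock z) ↔ p z.1 ∧ q z.2) :
    (((s ×ˢ t).map pairBlock).filter P).card = (s.filter p).card * (t.filter q).card := by
  rw [Multiset.filter_map, Multiset.card_map, ← Multiset.card_product, ← Multiset.filter_product]
  exact congrArg _ (Multiset.filter_congr fun z _ => hP z)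

end PairBlock

namespace BIBD

variable {n k lam : ℕ}

def productGDD (D : BIBD n k lam) (r : ℕ)
    (hr : ∀ x : Fin n, (D.blocks.filter fun B => x ∈ B).card = r) :
    GDD n (2 * k) (lam * D.blocks.card) (r ^ 2) where
  blocks := (D.blocks ×ˢ D.blocks).map pairBlock
  blockCard B hB := by
    obtain ⟨z, hz, rfl⟩ := Multiset.mem_map.mp hB
    rw [Multiset.mem_product] at hz
    rw [card_pairBlock, D.blockCard _ hz.1, D.blockCard _ hz.2, two_mul]
  rep := r * D.blocks.card
  pointRep
    | (0, a) => by
      rw [card_filter_map_pairBlock_product _ _ _ (a ∈ ·) (fun _ => True) (by simp), hr,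
        Multiset.filter_true]
    | (1, a) => by
      rw [card_filter_map_pairBlock_product _ _ _ (fun _ => True) (a ∈ ·) (by simp), hr,
        Multiset.filter_true, mul_comm]
  samePairs
    | (0, a), (0, b), hne, _ => by
      rw [card_filter_map_pairBlock_product _ _ _ (fun B => a ∈ B ∧ b ∈ B) (fun _ => True)
        (by simp), D.pairs a b (by simpa using hne), Multiset.filter_true]
    | (1, a), (1, b), hne, _ => by
      rw [card_filter_map_pairBlock_product _ _ _ (fun _ => True) (fun B => a ∈ B ∧ b ∈ B)
        (by simp), D.pairs a b (by simpa using hne), Multiset.filter_true, mul_comm]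
    | (0, _), (1, _), _, h => absurd h Fin.zero_ne_one
    | (1, _), (0, _), _, h => absurd h Fin.zero_ne_one.symm
  crossPairs
    | (0, a), (1, b), _ => by
      rw [card_filter_map_pairBlock_product _ _ _ (a ∈ ·) (b ∈ ·) (by simp), hr, hr, sq]
    | (1, a), (0, b), _ => by
      rw [card_filter_map_pairBlock_product _ _ _ (b ∈ ·) (a ∈ ·) (by simp [and_comm]), hr, hr,
        sq]
    | (0, _), (0, _), h | (1, _), (1, _), h => absurd rfl h

theorem productGDD_hasConfig (D : BIBD n k lam) (r : ℕ)
    (hr : ∀ x : Fin n, (D.blocks.filter fun B => x ∈ B).card = r) :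
    (D.productGDD r hr).HasConfig k k := by
  intro B hB
  obtain ⟨z, hz, rfl⟩ := Multiset.mem_map.mp hB
  rw [Multiset.mem_product] at hz
  left
  rw [card_filter_fst_eq_zero_pairBlock, card_filter_fst_eq_one_pairBlock, D.blockCard _ hz.1,
    D.blockCard _ hz.2]
  exact ⟨rfl, rfl⟩

end BIBD

theorem stmt_10 (n k lam b r : ℕ) (D : BIBD n k lam) (hb : D.blocks.card = b)
    (hr : ∀ x : Fin n, (D.blocks.filter fun B => x ∈ B).card = r) :
    ∃ G : GDD n (2 * k) (lam * b) (r ^ 2), G.HasConfig k k := by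
  subst hb
  exact ⟨D.productGDD r hr, D.productGDD_hasConfig r hr⟩
end

section
/- If n ≡ 3 (mod 6), then λ₁ = n/3 and λ₂ = (n−1)/2 are realizable as the indices of a configuration (3,3) GDD(n,2,6;λ₁,λ₂), assuming the existence of a resolvable TS(n,1) (Kirkman triple system) with (n−1)/2 parallel classes of n/3 blocks each. -/
namespace Multiset

variable {α β ι : Type*}

theorem countP_product (p : α → Prop) (q : β → Prop) [DecidablePred p] [DecidablePred q]
    (s : Multiset α) (t : Multiset β) :
    countP (fun x => p x.1 ∧ q x.2) (s ×ˢ t) = countP p s * countP q t := by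
  induction s using Multiset.induction with
  | empty => simp
  | cons a s ih =>
    rw [cons_product, countP_add, countP_map, ← countP_eq_card_filter, ih, countP_cons]
    by_cases h : p a <;> simp [h, add_mul, add_comm]

theorem countP_finset_sum (p : α → Prop) [DecidablePred p] (s : Finset ι) (f : ι → Multiset α) :
    countP p (∑ j ∈ s, f j) = ∑ j ∈ s, countP p (f j) :=
  map_sum (countPAddMonoidHom p) f s

end Multiset

open Multiset

section PairedBlocks

variable {α ι : Type*} [DecidableEq α]

def twoGroupBlock (B₁ B₂ : Finset α) : Finset (Fin 2 × α) :=
  {0} ×ˢ B₁ ∪ {1} ×ˢ B₂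

variable {B₁ B₂ : Finset α}

@[simp]
lemma zero_mem_twoGroupBlock {a : α} : ((0 : Fin 2), a) ∈ twoGroupBlock B₁ B₂ ↔ a ∈ B₁ := by
  simp [twoGroupBlock]

@[simp]
lemma one_mem_twoGroupBlock {a : α} : ((1 : Fin 2), a) ∈ twoGroupBlock B₁ B₂ ↔ a ∈ B₂ := by
  simp [twoGroupBlock]

lemma card_filter_fst_eq_zero_twoGroupBlock :
    ((twoGroupBlock B₁ B₂).filter fun p => p.1 = 0).card = B₁.card := by
  have : (twoGroupBlock B₁ B₂).filter (fun p => p.1 = 0) = {0} ×ˢ B₁ := by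
    ext ⟨i, a⟩
    fin_cases i <;> simp [twoGroupBlock]
  simp [this]

lemma card_filter_fst_eq_one_twoGroupBlock :
    ((twoGroupBlock B₁ B₂).filter fun p => p.1 = 1).card = B₂.card := by
  have : (twoGroupBlock B₁ B₂).filter (fun p => p.1 = 1) = {1} ×ˢ B₂ := by
    ext ⟨i, a⟩
    fin_cases i <;> simp [twoGroupBlock]
  simp [this]

lemma card_twoGroupBlock : (twoGroupBlock B₁ B₂).card = B₁.card + B₂.card := by
  rw [twoGroupBlock, Finset.card_union_of_disjoint (Finset.disjoint_product.2 (Or.inl (by simp))),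
    Finset.card_product, Finset.card_product, Finset.card_singleton, Finset.card_singleton,
    one_mul, one_mul]

variable [Fintype ι]

def pairedBlocks (P : ι → Multiset (Finset α)) : Multiset (Finset (Fin 2 × α)) :=
  ∑ j, (P j ×ˢ P j).map fun B => twoGroupBlock B.1 B.2

lemma mem_pairedBlocks {P : ι → Multiset (Finset α)} {B : Finset (Fin 2 × α)} :
    B ∈ pairedBlocks P ↔ ∃ j, ∃ B₁ ∈ P j, ∃ B₂ ∈ P j, twoGroupBlock B₁ B₂ = B := by
  simp [pairedBlocks, Multiset.mem_sum, and_assoc]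

lemma countP_pairedBlocks (P : ι → Multiset (Finset α)) (r : Finset (Fin 2 × α) → Prop)
    (p q : Finset α → Prop) [DecidablePred r] [DecidablePred p] [DecidablePred q]
    (hr : ∀ B₁ B₂, r (twoGroupBlock B₁ B₂) ↔ p B₁ ∧ q B₂) :
    countP r (pairedBlocks P) = ∑ j, countP p (P j) * countP q (P j) := by
  rw [pairedBlocks, countP_finset_sum]
  refine Finset.sum_congr rfl fun j _ => ?_
  rw [countP_map, ← countP_eq_card_filter, ← countP_product]
  exact countP_congr rfl fun B _ => propext (hr B.1 B.2)

end PairedBlocks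

section Resolvable

variable {n k lam s t : ℕ} {D : BIBD n k lam} {classes : Fin s → Multiset (Finset (Fin n))}

lemma countP_mem_class (ha : ∀ j, ∀ x : Fin n, ((classes j).filter fun B => x ∈ B).card = 1)
    (j : Fin s) (a : Fin n) : countP (a ∈ ·) (classes j) = 1 := by
  rw [countP_eq_card_filter, ha]

lemma sum_countP_pair_mem_classes (hpart : ∑ j, classes j = D.blocks) {a b : Fin n}
    (hab : a ≠ b) : ∑ j, countP (fun B => a ∈ B ∧ b ∈ B) (classes j) = lam := by
  rw [← countP_finset_sum, hpart, countP_eq_card_filter, D.pairs a b hab]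

lemma card_of_mem_class (hpart : ∑ j, classes j = D.blocks) {j : Fin s} {B : Finset (Fin n)}
    (hB : B ∈ classes j) : B.card = k :=
  D.blockCard B <| hpart ▸ Multiset.mem_of_le
    (Finset.single_le_sum (fun i _ => zero_le (classes i)) (Finset.mem_univ j)) hB

lemma card_filter_fst_of_mem_pairedBlocks (hpart : ∑ j, classes j = D.blocks)
    {B : Finset (Fin 2 × Fin n)} (hB : B ∈ pairedBlocks classes) :
    (B.filter fun p => p.1 = 0).card = k ∧ (B.filter fun p => p.1 = 1).card = k := by
  obtain ⟨j, B₁, h₁, B₂, h₂, rfl⟩ := mem_pairedBlocks.1 hB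
  rw [card_filter_fst_eq_zero_twoGroupBlock, card_filter_fst_eq_one_twoGroupBlock]
  exact ⟨card_of_mem_class hpart h₁, card_of_mem_class hpart h₂⟩

lemma card_of_mem_pairedBlocks (hpart : ∑ j, classes j = D.blocks)
    {B : Finset (Fin 2 × Fin n)} (hB : B ∈ pairedBlocks classes) : B.card = 2 * k := by
  obtain ⟨j, B₁, h₁, B₂, h₂, rfl⟩ := mem_pairedBlocks.1 hB
  rw [card_twoGroupBlock, card_of_mem_class hpart h₁, card_of_mem_class hpart h₂, two_mul]

lemma countP_mem_pairedBlocks (ht : ∀ j, (classes j).card = t)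
    (ha : ∀ j, ∀ x : Fin n, ((classes j).filter fun B => x ∈ B).card = 1) (x : Fin 2 × Fin n) :
    countP (x ∈ ·) (pairedBlocks classes) = s * t := by
  obtain ⟨i, a⟩ := x
  fin_cases i
  · rw [countP_pairedBlocks classes _ (a ∈ ·) (fun _ => True) (by simp)]
    simp [countP_mem_class ha, ht]
  · rw [countP_pairedBlocks classes _ (fun _ => True) (a ∈ ·) (by simp)]
    simp [countP_mem_class ha, ht]

lemma countP_pair_mem_pairedBlocks_of_fst_eq (hpart : ∑ j, classes j = D.blocks)
    (ht : ∀ j, (classes j).card = t) {x y : Fin 2 × Fin n} (hxy : x ≠ y) (h : x.1 = y.1) :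
    countP (fun B => x ∈ B ∧ y ∈ B) (pairedBlocks classes) = t * lam := by
  obtain ⟨i, a⟩ := x
  obtain ⟨_, b⟩ := y
  obtain rfl : i = _ := h
  have hab : a ≠ b := by rintro rfl; exact hxy rfl
  fin_cases i
  · rw [countP_pairedBlocks classes _ (fun B => a ∈ B ∧ b ∈ B) (fun _ => True) (by simp)]
    simp only [countP_True, ht]
    rw [← Finset.sum_mul, sum_countP_pair_mem_classes hpart hab, mul_comm]
  · rw [countP_pairedBlocks classes _ (fun _ => True) (fun B => a ∈ B ∧ b ∈ B) (by simp)]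
    simp only [countP_True, ht]
    rw [← Finset.mul_sum, sum_countP_pair_mem_classes hpart hab]

lemma countP_pair_mem_pairedBlocks_of_fst_ne
    (ha : ∀ j, ∀ x : Fin n, ((classes j).filter fun B => x ∈ B).card = 1)
    {x y : Fin 2 × Fin n} (h : x.1 ≠ y.1) :
    countP (fun B => x ∈ B ∧ y ∈ B) (pairedBlocks classes) = s := by
  obtain ⟨i, a⟩ := x
  obtain ⟨j, b⟩ := y
  fin_cases i <;> fin_cases j <;> simp only [ne_eq, not_true_eq_false] at h
  · rw [countP_pairedBlocks classes _ (a ∈ ·) (b ∈ ·) (by simp)]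
    simp [countP_mem_class ha]
  · rw [countP_pairedBlocks classes _ (b ∈ ·) (a ∈ ·) (by simp [and_comm])]
    simp [countP_mem_class ha]

theorem exists_gdd_hasConfig_of_resolvable (hpart : ∑ j, classes j = D.blocks)
    (ht : ∀ j, (classes j).card = t)
    (ha : ∀ j, ∀ x : Fin n, ((classes j).filter fun B => x ∈ B).card = 1) :
    ∃ G : GDD n (2 * k) (t * lam) s, G.HasConfig k k := by
  refine ⟨⟨pairedBlocks classes, fun B => card_of_mem_pairedBlocks hpart, s * t, fun x => ?_,
    fun x y hxy h => ?_, fun x y h => ?_⟩,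
    fun B hB => Or.inl (card_filter_fst_of_mem_pairedBlocks hpart hB)⟩ <;>
    rw [← countP_eq_card_filter]
  exacts [countP_mem_pairedBlocks ht ha x, countP_pair_mem_pairedBlocks_of_fst_eq hpart ht hxy h,
    countP_pair_mem_pairedBlocks_of_fst_ne ha h]

end Resolvable

theorem stmt_12_general (n : ℕ) (D : BIBD n 3 1)
    (classes : Fin ((n - 1) / 2) → Multiset (Finset (Fin n)))
    (hpart : ∑ j, classes j = D.blocks)
    (ht : ∀ j, (classes j).card = n / 3)
    (ha : ∀ j, ∀ x : Fin n, ((classes j).filter fun B => x ∈ B).card = 1) :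
    ∃ G : GDD n 6 (n / 3) ((n - 1) / 2), G.HasConfig 3 3 := by
  have h := exists_gdd_hasConfig_of_resolvable hpart ht ha
  rwa [mul_one] at h

theorem stmt_12 (n : ℕ) (hn : n % 6 = 3) (D : BIBD n 3 1)
    (classes : Fin ((n - 1) / 2) → Multiset (Finset (Fin n)))
    (hpart : ∑ j, classes j = D.blocks)
    (ht : ∀ j, (classes j).card = n / 3)
    (ha : ∀ j, ∀ x : Fin n, ((classes j).filter fun B => x ∈ B).card = 1) :
    ∃ G : GDD n 6 (n / 3) ((n - 1) / 2), G.HasConfig 3 3 :=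
  stmt_12_general n D classes hpart ht ha
end

section
/- There does not exist a configuration (2,4) GDD(8,2,6;1,1): there is no collection of 6-element blocks on two groups of size 8, each block meeting one group in 2 points and the other in 4, such that every same-group pair occurs in exactly 1 block and every cross-group pair in exactly 1 block. -/
lemma msum_swap {α β : Type*} [DecidableEq β] (m : Multiset α) (s : Finset β)
    (R : β → α → Prop) [∀ b a, Decidable (R b a)] :
    ∑ b ∈ s, (m.filter fun a => R b a).card
      = (m.map fun a => (s.filter fun b => R b a).card).sum := by
  induction m using Multiset.induction with
  | empty => simp
  | cons a m ih =>
    simp only [Multiset.filter_cons, Multiset.card_add, Multiset.map_cons, Multiset.sum_cons,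
      Finset.sum_add_distrib, ih, apply_ite Multiset.card, Multiset.card_singleton,
      Multiset.card_zero]
    rw [Finset.card_filter]

lemma msum_indicator {α : Type*} (m : Multiset α) (p : α → Prop) [DecidablePred p] :
    (m.map fun a => if p a then (1:ℕ) else 0).sum = (m.filter p).card := by
  induction m using Multiset.induction with
  | empty => simp
  | cons a m ih =>
    simp only [Multiset.map_cons, Multiset.sum_cons, ih, Multiset.filter_cons,
      Multiset.card_add, apply_ite Multiset.card, Multiset.card_singleton, Multiset.card_zero]

lemma msum_one_branch {α : Type*} (m : Multiset α) (p : α → Prop) [DecidablePred p] (c : ℕ) :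
    (m.map fun a => if p a then c else 0).sum = c * (m.filter p).card := by
  induction m using Multiset.induction with
  | empty => simp
  | cons a m ih =>
    simp only [Multiset.map_cons, Multiset.sum_cons, ih, Multiset.filter_cons,
      Multiset.card_add, apply_ite Multiset.card, Multiset.card_singleton, Multiset.card_zero]
    by_cases hp : p a <;> simp [hp] <;> ring

lemma msum_two_branch {α : Type*} (m : Multiset α) (p q : α → Prop) [DecidablePred p]
    [DecidablePred q] (c d : ℕ) :
    (m.map fun a => if p a then c else if q a then d else 0).sum
      = c * (m.filter p).card + d * (m.filter fun a => ¬ p a ∧ q a).card := by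
  induction m using Multiset.induction with
  | empty => simp
  | cons a m ih =>
    simp only [Multiset.map_cons, Multiset.sum_cons, ih, Multiset.filter_cons,
      Multiset.card_add, apply_ite Multiset.card, Multiset.card_singleton, Multiset.card_zero]
    by_cases hp : p a <;> by_cases hq : q a <;> simp [hp, hq] <;> ring

lemma bij_card (c : Fin 2) (B : Finset (Fin 2 × Fin 8)) :
    (Finset.univ.filter fun y : Fin 8 => (c, y) ∈ B).card
      = (B.filter fun p => p.1 = c).card := by
  apply Finset.card_bij (fun y _ => (c, y))
  · intro a ha
    simp only [Finset.mem_filter, Finset.mem_univ, true_and] at ha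
    simp [ha]
  · intro a _ b _ h
    exact ((Prod.mk.injEq _ _ _ _).mp h).2
  · intro p hp
    obtain ⟨p1, p2⟩ := p
    simp only [Finset.mem_filter] at hp
    obtain ⟨hpB, hp1⟩ := hp
    subst hp1
    exact ⟨p2, by simp [hpB], rfl⟩

lemma deg4_eq_two (D : GDD 8 6 1 1) (hc : D.HasConfig 2 4) (i : Fin 8) :
    (D.blocks.filter fun B =>
      ((0:Fin 2), i) ∈ B ∧ (B.filter fun p => p.1 = 0).card = 4).card = 2 := by
  set m := D.blocks with hm
  -- first equation: same-group pairs through (0,i)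
  have e1 : ∑ y ∈ Finset.univ.erase i,
      (m.filter fun B => ((0:Fin 2), i) ∈ B ∧ ((0:Fin 2), y) ∈ B).card = 7 := by
    have h1 : ∀ y ∈ Finset.univ.erase i,
        (m.filter fun B => ((0:Fin 2), i) ∈ B ∧ ((0:Fin 2), y) ∈ B).card = 1 := by
      intro y hy
      rw [Finset.mem_erase] at hy
      exact D.samePairs _ _ (by simp only [Ne, Prod.mk.injEq, true_and]; exact fun h => hy.1 h.symm) rfl
    rw [Finset.sum_congr rfl h1]
    simp [Finset.card_erase_of_mem]
  rw [msum_swap] at e1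
  have c1 : (m.map fun B => ((Finset.univ.erase i).filter
        fun y => ((0:Fin 2), i) ∈ B ∧ ((0:Fin 2), y) ∈ B).card)
      = m.map fun B =>
        if ((0:Fin 2), i) ∈ B ∧ (B.filter fun p => p.1 = 0).card = 2 then 1
        else if ((0:Fin 2), i) ∈ B ∧ (B.filter fun p => p.1 = 0).card = 4 then 3 else 0 := by
    apply Multiset.map_congr rfl
    intro B hB
    by_cases hmem : ((0:Fin 2), i) ∈ B
    · have hfc : ((Finset.univ.erase i).filter
          fun y => ((0:Fin 2), i) ∈ B ∧ ((0:Fin 2), y) ∈ B)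
          = (Finset.univ.filter fun y => ((0:Fin 2), y) ∈ B).erase i := by
        rw [← Finset.filter_erase]
        apply Finset.filter_congr; intro y _; simp [hmem]
      rw [hfc, Finset.card_erase_of_mem (by simp [hmem]), bij_card]
      rcases hc B hB with ⟨h0, _⟩ | ⟨h0, _⟩ <;> simp [h0, hmem]
    · simp [hmem, Finset.filter_eq_empty_iff]
  rw [c1, msum_two_branch] at e1
  -- second equation: cross pairs through (0,i)
  have e2 : ∑ y ∈ (Finset.univ : Finset (Fin 8)),
      (m.filter fun B => ((0:Fin 2), i) ∈ B ∧ ((1:Fin 2), y) ∈ B).card = 8 := by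
    have h2 : ∀ y ∈ (Finset.univ : Finset (Fin 8)),
        (m.filter fun B => ((0:Fin 2), i) ∈ B ∧ ((1:Fin 2), y) ∈ B).card = 1 := by
      intro y _
      exact D.crossPairs _ _ (by simp)
    rw [Finset.sum_congr rfl h2]
    simp
  rw [msum_swap] at e2
  have c2 : (m.map fun B => (Finset.univ.filter
        fun y => ((0:Fin 2), i) ∈ B ∧ ((1:Fin 2), y) ∈ B).card)
      = m.map fun B =>
        if ((0:Fin 2), i) ∈ B ∧ (B.filter fun p => p.1 = 0).card = 2 then 4
        else if ((0:Fin 2), i) ∈ B ∧ (B.filter fun p => p.1 = 0).card = 4 then 2 else 0 := by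
    apply Multiset.map_congr rfl
    intro B hB
    by_cases hmem : ((0:Fin 2), i) ∈ B
    · have hfc : (Finset.univ.filter
          fun y => ((0:Fin 2), i) ∈ B ∧ ((1:Fin 2), y) ∈ B)
          = Finset.univ.filter fun y => ((1:Fin 2), y) ∈ B := by
        apply Finset.filter_congr; intro y _; simp [hmem]
      rw [hfc, bij_card]
      rcases hc B hB with ⟨h0, h1⟩ | ⟨h0, h1⟩ <;> simp [h0, h1, hmem]
    · simp [hmem, Finset.filter_eq_empty_iff]
  rw [c2, msum_two_branch] at e2
  have hfilt : (m.filter fun B => ¬(((0:Fin 2), i) ∈ B ∧ (B.filter fun p => p.1 = 0).card = 2)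
        ∧ (((0:Fin 2), i) ∈ B ∧ (B.filter fun p => p.1 = 0).card = 4))
      = m.filter fun B => ((0:Fin 2), i) ∈ B ∧ (B.filter fun p => p.1 = 0).card = 4 := by
    apply Multiset.filter_congr
    intro B _
    constructor
    · exact fun h => h.2
    · exact fun h => ⟨fun h' => by omega, h⟩
  rw [hfilt] at e1 e2
  omega

lemma cardT_eq_four (D : GDD 8 6 1 1) (hc : D.HasConfig 2 4) :
    (D.blocks.filter fun B => (B.filter fun p => p.1 = 0).card = 4).card = 4 := by
  set m := D.blocks with hm
  have e3 : ∑ i ∈ (Finset.univ : Finset (Fin 8)),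
      (m.filter fun B => ((0:Fin 2), i) ∈ B ∧ (B.filter fun p => p.1 = 0).card = 4).card
        = 16 := by
    rw [Finset.sum_congr rfl fun i _ => deg4_eq_two D hc i]
    simp
  rw [msum_swap] at e3
  have c3 : (m.map fun B => (Finset.univ.filter
        fun i => ((0:Fin 2), i) ∈ B ∧ (B.filter fun p => p.1 = 0).card = 4).card)
      = m.map fun B => if (B.filter fun p => p.1 = 0).card = 4 then 4 else 0 := by
    apply Multiset.map_congr rfl
    intro B _
    by_cases h4 : (B.filter fun p => p.1 = 0).card = 4
    · have hfc : (Finset.univ.filter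
          fun i => ((0:Fin 2), i) ∈ B ∧ (B.filter fun p => p.1 = 0).card = 4)
          = Finset.univ.filter fun i : Fin 8 => ((0:Fin 2), i) ∈ B := by
        apply Finset.filter_congr; intro y _; simp [h4]
      rw [hfc, bij_card, h4]; simp
    · simp [h4, Finset.filter_eq_empty_iff]
  rw [c3, msum_one_branch] at e3
  omega

theorem stmt_14 : ¬ ∃ D : GDD 8 6 1 1, D.HasConfig 2 4 := by
  rintro ⟨D, hc⟩
  set m := D.blocks with hm
  have hT := cardT_eq_four D hc
  rw [← hm] at hT
  -- pick a block with 4 points in group 0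
  have hne : (m.filter fun B => (B.filter fun p => p.1 = 0).card = 4) ≠ 0 := by
    intro h; rw [h] at hT; simp at hT
  obtain ⟨B, hB⟩ := Multiset.exists_mem_of_ne_zero hne
  rw [Multiset.mem_filter] at hB
  obtain ⟨hBm, hB4⟩ := hB
  set m' := m.erase B with hm'
  have hcons : B ::ₘ m' = m := Multiset.cons_erase hBm
  set B0 := B.filter fun p => p.1 = 0 with hB0
  -- each point of B0 is in exactly one other 4-type block
  have e4 : ∑ p ∈ B0, (m'.filter fun C => p ∈ C ∧ (C.filter fun q => q.1 = 0).card = 4).card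
      = 4 := by
    have h4 : ∀ p ∈ B0,
        (m'.filter fun C => p ∈ C ∧ (C.filter fun q => q.1 = 0).card = 4).card = 1 := by
      intro p hp
      rw [hB0, Finset.mem_filter] at hp
      obtain ⟨hpB, hp0⟩ := hp
      have hp' : p = ((0:Fin 2), p.2) := by
        obtain ⟨p1, p2⟩ := p; simp only at hp0; rw [hp0]
      have hd := deg4_eq_two D hc p.2
      rw [← hp', ← hm] at hd
      rw [← hcons, Multiset.filter_cons_of_pos _ ⟨hpB, hB4⟩, Multiset.card_cons] at hd
      omega
    rw [Finset.sum_congr rfl h4, Finset.sum_const, smul_eq_mul, mul_one, hB0, hB4]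
  rw [msum_swap] at e4
  -- each other block meets B0 in at most one point
  have hbound : ∀ C ∈ m',
      (B0.filter fun p => p ∈ C ∧ (C.filter fun q => q.1 = 0).card = 4).card
        ≤ if (C.filter fun q => q.1 = 0).card = 4 then 1 else 0 := by
    intro C hC
    by_cases h4 : (C.filter fun q => q.1 = 0).card = 4
    · rw [if_pos h4]
      by_contra hgt
      push_neg at hgt
      obtain ⟨p, hp, q, hq, hpq⟩ := Finset.one_lt_card.mp hgt
      rw [Finset.mem_filter] at hp hq
      have hp0 : p ∈ B ∧ p.1 = 0 := Finset.mem_filter.mp hp.1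
      have hq0 : q ∈ B ∧ q.1 = 0 := Finset.mem_filter.mp hq.1
      have hsp := D.samePairs p q hpq (by rw [hp0.2, hq0.2])
      rw [← hm, ← hcons, Multiset.filter_cons_of_pos _ ⟨hp0.1, hq0.1⟩,
        Multiset.card_cons] at hsp
      have hCmem : C ∈ m'.filter fun E => p ∈ E ∧ q ∈ E :=
        Multiset.mem_filter.mpr ⟨hC, hp.2.1, hq.2.1⟩
      have : 0 < (m'.filter fun E => p ∈ E ∧ q ∈ E).card :=
        Multiset.card_pos.mpr fun h => by rw [h] at hCmem; simp at hCmem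
      omega
    · simp [h4, Finset.filter_eq_empty_iff]
  have hle : (m'.map fun C =>
        (B0.filter fun p => p ∈ C ∧ (C.filter fun q => q.1 = 0).card = 4).card).sum
      ≤ (m'.map fun C => if (C.filter fun q => q.1 = 0).card = 4 then 1 else 0).sum :=
    Multiset.sum_map_le_sum_map _ _ hbound
  rw [msum_indicator] at hle
  have hm'T : (m'.filter fun C => (C.filter fun q => q.1 = 0).card = 4).card = 3 := by
    rw [← hcons] at hT
    have h3 : (Multiset.filter (fun C => (Finset.filter (fun q => q.1 = 0) C).card = 4) (B ::ₘ m'))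
        = B ::ₘ (Multiset.filter (fun C => (Finset.filter (fun q => q.1 = 0) C).card = 4) m') :=
      Multiset.filter_cons_of_pos _ hB4
    rw [h3, Multiset.card_cons] at hT
    omega
  rw [hm'T, e4] at hle
  omega
end

section
/- If there exists an α-resolvable BIBD(n,4,λ) with n even and λ = 3α, then there exists a configuration (2,4) GDD(n,2,6; (n/2)(λ + α/2), 2α(n−1)). -/
namespace Multiset

variable {α β : Type*}

theorem card_filter_sum (p : α → Prop) [DecidablePred p] (S : Multiset (Multiset α)) :
    (S.sum.filter p).card = (S.map fun s => (s.filter p).card).sum := by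
  induction S using Multiset.induction_on with
  | empty => simp
  | cons s S ih => simp [filter_add, ih]

theorem card_filter_product (s : Multiset α) (t : Multiset β)
    (q : α → Prop) [DecidablePred q] (r : β → Prop) [DecidablePred r] :
    ((s ×ˢ t).filter fun x => q x.1 ∧ r x.2).card = (s.filter q).card * (t.filter r).card := by
  induction s using Multiset.induction_on with
  | empty => simp
  | cons a s ih => by_cases ha : q a <;> simp [filter_add, filter_map, ih, ha, add_mul, add_comm]

theorem mem_sum_of_mem {a : α} {s : Multiset α} {S : Multiset (Multiset α)} (hs : s ∈ S)
    (ha : a ∈ s) : a ∈ S.sum :=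
  mem_of_le (le_sum_of_mem hs) ha

theorem exists_le_card_eq {s : Multiset α} {k : ℕ} (hk : k ≤ card s) :
    ∃ t ≤ s, card t = k := by
  obtain ⟨t, ht⟩ : ∃ t, t ∈ powersetCard k s := by
    rw [← card_pos_iff_exists_mem, card_powersetCard]
    exact Nat.choose_pos hk
  exact ⟨t, (mem_powersetCard.mp ht).1, (mem_powersetCard.mp ht).2⟩

theorem exists_pairing_of_card_eq_mul [DecidableEq β] (s : Multiset α) (E : Multiset β) (t : ℕ)
    (h : card E = card s * t) :
    ∃ P : Multiset (α × Multiset β), P.map Prod.fst = s ∧ (P.map Prod.snd).sum = E ∧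
      ∀ x ∈ P, card x.2 = t := by
  induction s using Multiset.induction_on generalizing E with
  | empty => exact ⟨0, rfl, by simpa [eq_comm] using h, by simp⟩
  | cons a s ih =>
    obtain ⟨E₁, hE₁, hcard⟩ := exists_le_card_eq (s := E) (k := t) (by simp [h, add_mul])
    obtain ⟨P, hfst, hsnd, hP⟩ := ih (E - E₁) (by simp [card_sub hE₁, h, hcard, add_mul])
    refine ⟨(a, E₁) ::ₘ P, by simp [hfst], by simp [hsnd, add_tsub_cancel_of_le hE₁], ?_⟩
    rintro x hx
    rcases mem_cons.mp hx with rfl | hx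
    exacts [hcard, hP x hx]

section Pairs

variable (P : Multiset (Multiset α × Multiset β)) (p : α → Prop) [DecidablePred p]
  (r : β → Prop) [DecidablePred r]

theorem sum_map_card_filter_fst :
    (P.map fun x => (x.1.filter p).card).sum = ((P.map Prod.fst).sum.filter p).card := by
  rw [card_filter_sum, map_map]
  rfl

theorem sum_map_card_filter_snd :
    (P.map fun x => (x.2.filter r).card).sum = ((P.map Prod.snd).sum.filter r).card := by
  rw [card_filter_sum, map_map]
  rfl

end Pairs

section DoubleCounting

variable [Fintype α] [DecidableEq α]

theorem sum_card_filter_mem (s : Multiset (Finset α)) :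
    ∑ x, (s.filter (x ∈ ·)).card = (s.map Finset.card).sum := by
  induction s using Multiset.induction_on with
  | empty => simp
  | cons B s ih => simp [filter_cons, Finset.sum_add_distrib, ih, apply_ite card]

theorem sum_card_filter_mem_mem (x : α) {s : Multiset (Finset α)} {k : ℕ}
    (hs : ∀ B ∈ s, B.card = k) :
    ∑ y ∈ Finset.univ.erase x, (s.filter fun B => x ∈ B ∧ y ∈ B).card =
      (s.filter (x ∈ ·)).card * (k - 1) := by
  induction s using Multiset.induction_on with
  | empty => simp
  | cons B s ih =>
    rw [forall_mem_cons] at hs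
    by_cases hx : x ∈ B <;>
      simp [filter_cons, Finset.sum_add_distrib, ih hs.2, hx, hs.1, add_mul, add_comm,
        apply_ite card]

theorem mul_card_eq_of_forall_card_filter_mem {s : Multiset (Finset α)} {k r : ℕ}
    (hk : ∀ B ∈ s, B.card = k) (hr : ∀ x, (s.filter (x ∈ ·)).card = r) :
    k * card s = Fintype.card α * r := by
  have := sum_card_filter_mem s
  simp only [hr, Finset.sum_const, Finset.card_univ, smul_eq_mul, map_congr rfl hk,
    map_const', sum_replicate] at this
  rw [this, mul_comm]

end DoubleCounting

end Multiset

section completeGraphEdges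

open Finset

def completeGraphEdges (n : ℕ) : Multiset (Finset (Fin n)) :=
  (univ.powersetCard 2).val

variable {n : ℕ}

theorem mem_completeGraphEdges {e : Finset (Fin n)} :
    e ∈ completeGraphEdges n ↔ e.card = 2 := by
  simp [completeGraphEdges]

theorem card_completeGraphEdges : (completeGraphEdges n).card = n.choose 2 := by
  simp [completeGraphEdges]

theorem card_filter_subset_completeGraphEdges (s : Finset (Fin n)) (hs : s.card ≤ 2) :
    ((completeGraphEdges n).filter (s ⊆ ·)).card = (n - s.card).choose (2 - s.card) := by
  rw [completeGraphEdges, ← Finset.filter_val, Finset.card_val,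
    card_filter_powersetCard_subset s univ 2 (subset_univ s) hs, card_univ, Fintype.card_fin]

theorem card_filter_mem_completeGraphEdges (u : Fin n) :
    ((completeGraphEdges n).filter (u ∈ ·)).card = n - 1 := by
  simpa using card_filter_subset_completeGraphEdges {u} (by simp)

theorem card_filter_mem_mem_completeGraphEdges {u v : Fin n} (huv : u ≠ v) :
    ((completeGraphEdges n).filter fun e => u ∈ e ∧ v ∈ e).card = 1 := by
  simpa [insert_subset_iff, huv] using card_filter_subset_completeGraphEdges {u, v} (card_le_two)

end completeGraphEdges

section glue

open Finset

def glue {n : ℕ} (B e : Finset (Fin n)) : Finset (Fin 2 × Fin n) :=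
  {0} ×ˢ B ∪ {1} ×ˢ e

variable {n : ℕ} {B e : Finset (Fin n)}

@[simp] theorem zero_mem_glue {u : Fin n} : ((0 : Fin 2), u) ∈ glue B e ↔ u ∈ B := by
  simp [glue]

@[simp] theorem one_mem_glue {u : Fin n} : ((1 : Fin 2), u) ∈ glue B e ↔ u ∈ e := by
  simp [glue]

theorem filter_fst_eq_zero_glue : (glue B e).filter (·.1 = 0) = {0} ×ˢ B := by
  ext ⟨g, u⟩; fin_cases g <;> simp [glue]

theorem filter_fst_eq_one_glue : (glue B e).filter (·.1 = 1) = {1} ×ˢ e := by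
  ext ⟨g, u⟩; fin_cases g <;> simp [glue]

theorem card_glue : (glue B e).card = B.card + e.card := by
  rw [glue, card_union_of_disjoint (disjoint_product.mpr (Or.inl (by simp))), card_product,
    card_product, card_singleton, card_singleton, one_mul, one_mul]

end glue

section gluedBlocks

def gluedBlocks {n : ℕ} (P : Multiset (Multiset (Finset (Fin n)) × Multiset (Finset (Fin n)))) :
    Multiset (Finset (Fin 2 × Fin n)) :=
  P.bind fun x => (x.1 ×ˢ x.2 + x.2 ×ˢ x.1).map fun y => glue y.1 y.2

variable {n : ℕ} {P : Multiset (Multiset (Finset (Fin n)) × Multiset (Finset (Fin n)))}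

theorem exists_of_mem_gluedBlocks {G : Finset (Fin 2 × Fin n)} (hG : G ∈ gluedBlocks P) :
    ∃ x ∈ P, ∃ B ∈ x.1, ∃ e ∈ x.2, G = glue B e ∨ G = glue e B := by
  simp only [gluedBlocks, Multiset.mem_bind, Multiset.mem_map, Multiset.mem_add,
    Multiset.mem_product] at hG
  obtain ⟨x, hx, ⟨B, e⟩, ⟨hB, he⟩ | ⟨he, hB⟩, rfl⟩ := hG
  exacts [⟨x, hx, B, hB, e, he, Or.inl rfl⟩, ⟨x, hx, e, hB, B, he, Or.inr rfl⟩]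

theorem card_filter_gluedBlocks (p : Finset (Fin 2 × Fin n) → Prop) [DecidablePred p]
    (q r : Finset (Fin n) → Prop) [DecidablePred q] [DecidablePred r]
    (h : ∀ B e, p (glue B e) ↔ q B ∧ r e) :
    ((gluedBlocks P).filter p).card =
      (P.map fun x => (x.1.filter q).card * (x.2.filter r).card +
        (x.2.filter q).card * (x.1.filter r).card).sum := by
  simp only [gluedBlocks, Multiset.filter_bind, Multiset.card_bind, Multiset.filter_map,
    Multiset.card_map, Function.comp_def, h, Multiset.filter_add, Multiset.card_add,
    Multiset.card_filter_product]

end gluedBlocks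

section Construction

variable {n : ℕ} {P : Multiset (Multiset (Finset (Fin n)) × Multiset (Finset (Fin n)))}

theorem card_filter_mem_gluedBlocks {a q t : ℕ}
    (hrep : ∀ x ∈ P, ∀ u : Fin n, (x.1.filter (u ∈ ·)).card = a)
    (hq : ∀ x ∈ P, Multiset.card x.1 = q) (ht : ∀ x ∈ P, Multiset.card x.2 = t)
    (hE : (P.map Prod.snd).sum = completeGraphEdges n) (x : Fin 2 × Fin n) :
    ((gluedBlocks P).filter (x ∈ ·)).card = Multiset.card P * (a * t) + q * (n - 1) := by
  obtain ⟨g, u⟩ := x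
  have hdeg := Multiset.sum_map_card_filter_snd P (u ∈ ·)
  rw [hE, card_filter_mem_completeGraphEdges] at hdeg
  obtain rfl | rfl : g = 0 ∨ g = 1 := by omega
  · rw [card_filter_gluedBlocks _ (u ∈ ·) (fun _ => True) fun _ _ => by simp]
    calc _ = (P.map fun x => a * t + q * (x.2.filter (u ∈ ·)).card).sum :=
          congrArg _ <| Multiset.map_congr rfl fun x hx => by
            simp [hrep x hx, hq x hx, ht x hx, mul_comm]
      _ = _ := by simp only [Multiset.sum_map_add, Multiset.sum_map_mul_left, Multiset.map_const',
                    Multiset.sum_replicate, smul_eq_mul, hdeg]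
  · rw [card_filter_gluedBlocks _ (fun _ => True) (u ∈ ·) fun _ _ => by simp]
    calc _ = (P.map fun x => q * (x.2.filter (u ∈ ·)).card + a * t).sum :=
          congrArg _ <| Multiset.map_congr rfl fun x hx => by
            simp [hrep x hx, hq x hx, ht x hx, mul_comm]
      _ = _ := by simp only [Multiset.sum_map_add, Multiset.sum_map_mul_left, Multiset.map_const',
                    Multiset.sum_replicate, smul_eq_mul, hdeg]; ring

theorem card_filter_mem_mem_gluedBlocks_of_fst_eq {lam q t : ℕ}
    (hpairs : ∀ u v : Fin n, u ≠ v →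
      ((P.map Prod.fst).sum.filter fun B => u ∈ B ∧ v ∈ B).card = lam)
    (hq : ∀ x ∈ P, Multiset.card x.1 = q) (ht : ∀ x ∈ P, Multiset.card x.2 = t)
    (hE : (P.map Prod.snd).sum = completeGraphEdges n) {x y : Fin 2 × Fin n} (hxy : x ≠ y)
    (hfst : x.1 = y.1) :
    ((gluedBlocks P).filter fun B => x ∈ B ∧ y ∈ B).card = lam * t + q := by
  obtain ⟨g, u⟩ := x
  obtain ⟨_, v⟩ := y
  obtain rfl : g = _ := hfst
  have huv : u ≠ v := by rintro rfl; exact hxy rfl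
  have hblocks := Multiset.sum_map_card_filter_fst P fun B => u ∈ B ∧ v ∈ B
  have hedges := Multiset.sum_map_card_filter_snd P fun e => u ∈ e ∧ v ∈ e
  rw [hpairs u v huv] at hblocks
  rw [hE, card_filter_mem_mem_completeGraphEdges huv] at hedges
  obtain rfl | rfl : g = 0 ∨ g = 1 := by omega
  · rw [card_filter_gluedBlocks _ (fun B => u ∈ B ∧ v ∈ B) (fun _ => True) fun _ _ => by simp]
    calc _ = (P.map fun x => (x.1.filter fun B => u ∈ B ∧ v ∈ B).card * t +
              (x.2.filter fun e => u ∈ e ∧ v ∈ e).card * q).sum :=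
          congrArg _ (Multiset.map_congr rfl fun x hx => by simp [hq x hx, ht x hx])
      _ = _ := by simp only [Multiset.sum_map_add, Multiset.sum_map_mul_right, hblocks, hedges,
                    one_mul]
  · rw [card_filter_gluedBlocks _ (fun _ => True) (fun e => u ∈ e ∧ v ∈ e) fun _ _ => by simp]
    calc _ = (P.map fun x => q * (x.2.filter fun e => u ∈ e ∧ v ∈ e).card +
              t * (x.1.filter fun B => u ∈ B ∧ v ∈ B).card).sum :=
          congrArg _ (Multiset.map_congr rfl fun x hx => by simp [hq x hx, ht x hx])
      _ = _ := by simp only [Multiset.sum_map_add, Multiset.sum_map_mul_left, hblocks, hedges]; ring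

theorem card_filter_mem_mem_gluedBlocks_of_fst_ne {a : ℕ}
    (hrep : ∀ x ∈ P, ∀ u : Fin n, (x.1.filter (u ∈ ·)).card = a)
    (hE : (P.map Prod.snd).sum = completeGraphEdges n) {x y : Fin 2 × Fin n}
    (hfst : x.1 ≠ y.1) :
    ((gluedBlocks P).filter fun B => x ∈ B ∧ y ∈ B).card = 2 * a * (n - 1) := by
  obtain ⟨g, u⟩ := x
  obtain ⟨g', v⟩ := y
  have hdeg (w : Fin n) : (P.map fun x => (x.2.filter (w ∈ ·)).card).sum = n - 1 := by
    rw [Multiset.sum_map_card_filter_snd, hE, card_filter_mem_completeGraphEdges]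
  have hsum (w w' : Fin n) :
      (P.map fun x => (x.1.filter (w ∈ ·)).card * (x.2.filter (w' ∈ ·)).card +
        (x.2.filter (w ∈ ·)).card * (x.1.filter (w' ∈ ·)).card).sum = 2 * a * (n - 1) := by
    calc _ = (P.map fun x =>
              a * (x.2.filter (w' ∈ ·)).card + a * (x.2.filter (w ∈ ·)).card).sum :=
          congrArg _ (Multiset.map_congr rfl fun x hx => by simp [hrep x hx, mul_comm])
      _ = _ := by simp only [Multiset.sum_map_add, Multiset.sum_map_mul_left, hdeg]; ring
  obtain rfl | rfl : g = 0 ∨ g = 1 := by omega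
  all_goals obtain rfl | rfl : g' = 0 ∨ g' = 1 := by omega
  · exact absurd rfl hfst
  · rw [card_filter_gluedBlocks _ (u ∈ ·) (v ∈ ·) (fun _ _ => by simp), hsum]
  · rw [card_filter_gluedBlocks _ (v ∈ ·) (u ∈ ·) (fun _ _ => by simp [and_comm]), hsum]
  · exact absurd rfl hfst

end Construction

theorem exists_hasConfig_gdd_of_pairing {n lam a q t : ℕ}
    {P : Multiset (Multiset (Finset (Fin n)) × Multiset (Finset (Fin n)))}
    (hcard : ∀ x ∈ P, ∀ B ∈ x.1, B.card = 4)
    (hrep : ∀ x ∈ P, ∀ u : Fin n, (x.1.filter (u ∈ ·)).card = a)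
    (hpairs : ∀ u v : Fin n, u ≠ v →
      ((P.map Prod.fst).sum.filter fun B => u ∈ B ∧ v ∈ B).card = lam)
    (hq : ∀ x ∈ P, Multiset.card x.1 = q) (ht : ∀ x ∈ P, Multiset.card x.2 = t)
    (hE : (P.map Prod.snd).sum = completeGraphEdges n) :
    ∃ G : GDD n 6 (lam * t + q) (2 * a * (n - 1)), G.HasConfig 2 4 := by
  have hglue : ∀ G ∈ gluedBlocks P, ∃ B e : Finset (Fin n), B.card = 4 ∧ e.card = 2 ∧
      (G = glue B e ∨ G = glue e B) := by
    intro G hG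
    obtain ⟨x, hx, B, hB, e, he, hG⟩ := exists_of_mem_gluedBlocks hG
    have he' : e ∈ completeGraphEdges n :=
      hE ▸ Multiset.mem_sum_of_mem (Multiset.mem_map_of_mem _ hx) he
    exact ⟨B, e, hcard x hx B hB, mem_completeGraphEdges.mp he', hG⟩
  refine ⟨⟨gluedBlocks P, ?_, _, card_filter_mem_gluedBlocks hrep hq ht hE,
    fun _ _ hxy hfst => card_filter_mem_mem_gluedBlocks_of_fst_eq hpairs hq ht hE hxy hfst,
    fun _ _ hfst => card_filter_mem_mem_gluedBlocks_of_fst_ne hrep hE hfst⟩, ?_⟩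
  · intro G hG
    obtain ⟨B, e, hB, he, rfl | rfl⟩ := hglue G hG <;> simp [card_glue, hB, he]
  · intro G hG
    obtain ⟨B, e, hB, he, rfl | rfl⟩ := hglue G hG <;>
      simp [filter_fst_eq_zero_glue, filter_fst_eq_one_glue, hB, he]

theorem GDD.exists_hasConfig_of_eq_zero {n k l₁ l₂ : ℕ} (h₁ : l₁ = 0) (h₂ : l₂ = 0)
    (s t : ℕ) :
    ∃ G : GDD n k l₁ l₂, G.HasConfig s t :=
  ⟨⟨0, by simp, 0, by simp, by simp [h₁], by simp [h₂]⟩, by simp [GDD.HasConfig]⟩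

theorem BIBD.card_classes {n lam a : ℕ} (D : BIBD n 4 lam) (hl : lam = 3 * a) (hn : 0 < n)
    (ha : 0 < a) {classes : Multiset (Multiset (Finset (Fin n)))} (hpart : classes.sum = D.blocks)
    (hrep : ∀ C ∈ classes, ∀ x : Fin n, (C.filter fun B => x ∈ B).card = a) :
    Multiset.card classes = n - 1 := by
  let x : Fin n := ⟨0, hn⟩
  have hr : (D.blocks.filter (x ∈ ·)).card = Multiset.card classes * a := by
    rw [← hpart, Multiset.card_filter_sum, Multiset.map_congr rfl fun C hC => hrep C hC x]
    simp
  have hpairs := Multiset.sum_card_filter_mem_mem x D.blockCard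
  rw [Finset.sum_congr rfl fun y hy => D.pairs x y (Finset.ne_of_mem_erase hy).symm, hr] at hpairs
  simp only [Finset.sum_const, Finset.card_erase_of_mem (Finset.mem_univ x), Finset.card_univ,
    Fintype.card_fin, smul_eq_mul, hl] at hpairs
  exact (Nat.eq_of_mul_eq_mul_right (by omega : 0 < 3 * a) (by linarith)).symm

theorem BIBD.four_mul_card_class {n lam a : ℕ} (D : BIBD n 4 lam)
    {classes : Multiset (Multiset (Finset (Fin n)))} (hpart : classes.sum = D.blocks)
    (hrep : ∀ C ∈ classes, ∀ x : Fin n, (C.filter fun B => x ∈ B).card = a)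
    {C : Multiset (Finset (Fin n))} (hC : C ∈ classes) :
    4 * Multiset.card C = n * a := by
  simpa using Multiset.mul_card_eq_of_forall_card_filter_mem
    (fun B hB => D.blockCard B (hpart ▸ Multiset.mem_sum_of_mem hC hB)) (hrep C hC)

theorem stmt_15 (n lam a : ℕ) (hn : Even n) (hl : lam = 3 * a)
    (D : BIBD n 4 lam)
    (classes : Multiset (Multiset (Finset (Fin n))))
    (hpart : classes.sum = D.blocks)
    (ha : ∀ C ∈ classes, ∀ x : Fin n, (C.filter fun B => x ∈ B).card = a) :
    ∃ G : GDD n 6 (n * (2 * lam + a) / 4) (2 * a * (n - 1)), G.HasConfig 2 4 := by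
  rcases Nat.eq_zero_or_pos n with rfl | hn0
  · exact GDD.exists_hasConfig_of_eq_zero (by simp) (by simp) 2 4
  rcases Nat.eq_zero_or_pos a with rfl | ha0
  · exact GDD.exists_hasConfig_of_eq_zero (by simp [hl]) (by simp) 2 4
  obtain ⟨t, rfl⟩ := hn
  have hm := D.card_classes hl hn0 ha0 hpart ha
  obtain ⟨C₀, hC₀⟩ := Multiset.card_pos_iff_exists_mem.mp (by omega : 0 < classes.card)
  have hclass {C} (hC : C ∈ classes) := D.four_mul_card_class hpart ha hC
  have hq (C) (hC : C ∈ classes) : Multiset.card C = Multiset.card C₀ :=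
    Nat.eq_of_mul_eq_mul_left (by norm_num : 0 < 4) ((hclass hC).trans (hclass hC₀).symm)
  have hl₁ : (t + t) * (2 * lam + a) / 4 = lam * t + Multiset.card C₀ :=
    Nat.div_eq_of_eq_mul_left (by norm_num) (by linarith [hclass hC₀])
  obtain ⟨P, hfst, hsnd, ht⟩ := Multiset.exists_pairing_of_card_eq_mul classes
    (completeGraphEdges (t + t)) t (by
      rw [card_completeGraphEdges, Nat.choose_two_right, hm]
      exact Nat.div_eq_of_eq_mul_left (by norm_num) (by ring))
  have hmem {x} (hx : x ∈ P) : x.1 ∈ classes := hfst ▸ Multiset.mem_map_of_mem _ hx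
  have hblocks : (P.map Prod.fst).sum = D.blocks := by rw [hfst, hpart]
  rw [hl₁]
  exact exists_hasConfig_gdd_of_pairing
    (fun x hx B hB =>
      D.blockCard B (hblocks ▸ Multiset.mem_sum_of_mem (Multiset.mem_map_of_mem _ hx) hB))
    (fun x hx => ha x.1 (hmem hx)) (hblocks ▸ D.pairs) (fun x hx => hq x.1 (hmem hx)) ht hsnd
end

section
/- For any configuration (1,5) GDD(n,2,6;λ₁,λ₂), we have λ₂ = λ₁(n−1)/(2n); equivalently 2n·λ₂ = λ₁(n−1). -/
open Finset

lemma sum_filter_card_s16 {α ι : Type*} (m : Multiset α) (s : Finset ι)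
    (q : ι → α → Prop) [∀ i a, Decidable (q i a)] :
    ∑ i ∈ s, (Multiset.filter (q i) m).card
      = (m.map fun a => (s.filter fun i => q i a).card).sum := by
  induction m using Multiset.induction with
  | empty => simp
  | cons a m ih =>
    simp only [Multiset.filter_cons, Multiset.card_add, Multiset.map_cons, Multiset.sum_cons,
      Finset.sum_add_distrib, ih]
    congr 1
    rw [Finset.card_filter]
    refine Finset.sum_congr rfl fun i _ => ?_
    by_cases h : q i a <;> simp [h]

lemma card_filter_pairs {P : Type*} [Fintype P] (r : P → P → Prop) [∀ x y, Decidable (r x y)] :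
    (Finset.univ.filter fun p : P × P => r p.1 p.2).card
      = ∑ x : P, (Finset.univ.filter fun y => r x y).card := by
  rw [Finset.card_filter, Fintype.sum_prod_type]
  exact Finset.sum_congr rfl fun a _ => (Finset.card_filter _ _).symm

lemma pairs_in_block {P : Type*} [Fintype P] [DecidableEq P] (r : P → P → Prop)
    [∀ x y, Decidable (r x y)] (B : Finset P) :
    (Finset.univ.filter fun p : P × P => r p.1 p.2 ∧ p.1 ∈ B ∧ p.2 ∈ B).card
      = ∑ x ∈ B, (B.filter fun y => r x y).card := by
  rw [Finset.card_filter, Fintype.sum_prod_type]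
  have h1 : ∀ a : P, (∑ b : P, if r a b ∧ a ∈ B ∧ b ∈ B then 1 else 0)
      = if a ∈ B then (B.filter fun y => r a y).card else 0 := by
    intro a
    by_cases ha : a ∈ B
    · rw [if_pos ha, Finset.card_filter, ← Finset.univ_inter B, ← Finset.sum_ite_mem]
      exact Finset.sum_congr rfl fun b _ => by by_cases hb : b ∈ B <;> simp [hb, ha]
    · rw [if_neg ha]
      simp [ha]
  rw [Finset.sum_congr rfl fun a _ => h1 a, Finset.sum_ite_mem, Finset.univ_inter]

lemma fin2_cross : ∀ a b : Fin 2, a = 0 → ((¬ a = b) ↔ b = 1) := by decide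
lemma fin2_cross' : ∀ a b : Fin 2, ¬ a = 0 → ((¬ a = b) ↔ b = 0) := by decide
lemma fin2_one : ∀ a : Fin 2, ¬ a = 0 → a = 1 := by decide

lemma cross_count {n : ℕ} (B : Finset (Fin 2 × Fin n)) :
    ∑ x ∈ B, (B.filter fun y => ¬ x.1 = y.1).card
      = (B.filter fun p => p.1 = 0).card * (B.filter fun p => p.1 = 1).card
        + (B.filter fun p => p.1 = 1).card * (B.filter fun p => p.1 = 0).card := by
  have hnot : (B.filter fun x => ¬ x.1 = 0) = B.filter fun p => p.1 = 1 :=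
    Finset.filter_congr fun y _ => ⟨fin2_one _, fun h h0 => by rw [h0] at h; exact absurd h (by decide)⟩
  have e0 : ∀ x ∈ B.filter (fun x : Fin 2 × Fin n => x.1 = 0),
      (B.filter fun y => ¬ x.1 = y.1).card = (B.filter fun p => p.1 = 1).card := by
    intro x hx
    rw [Finset.mem_filter] at hx
    congr 1
    exact Finset.filter_congr fun y _ => fin2_cross x.1 y.1 hx.2
  have e1 : ∀ x ∈ B.filter (fun x : Fin 2 × Fin n => ¬ x.1 = 0),
      (B.filter fun y => ¬ x.1 = y.1).card = (B.filter fun p => p.1 = 0).card := by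
    intro x hx
    rw [Finset.mem_filter] at hx
    congr 1
    exact Finset.filter_congr fun y _ => fin2_cross' x.1 y.1 hx.2
  rw [← Finset.sum_filter_add_sum_filter_not B (fun x => x.1 = 0),
    Finset.sum_congr rfl e0, Finset.sum_congr rfl e1, Finset.sum_const, Finset.sum_const,
    smul_eq_mul, smul_eq_mul, hnot]

lemma same_count {n : ℕ} (B : Finset (Fin 2 × Fin n)) :
    ∑ x ∈ B, (B.filter fun y => ¬ x = y ∧ x.1 = y.1).card
      = (B.filter fun p => p.1 = 0).card * ((B.filter fun p => p.1 = 0).card - 1)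
        + (B.filter fun p => p.1 = 1).card * ((B.filter fun p => p.1 = 1).card - 1) := by
  have hnot : (B.filter fun x => ¬ x.1 = 0) = B.filter fun p => p.1 = 1 :=
    Finset.filter_congr fun y _ => ⟨fin2_one _, fun h h0 => by rw [h0] at h; exact absurd h (by decide)⟩
  have key : ∀ x ∈ B, (B.filter fun y => ¬ x = y ∧ x.1 = y.1).card
      = (if x.1 = 0 then (B.filter fun p => p.1 = 0).card - 1
         else (B.filter fun p => p.1 = 1).card - 1) := by
    intro x hxB
    have hx1 : x.1 = 0 ∨ x.1 = 1 := by
      rcases em (x.1 = 0) with h | h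
      · exact Or.inl h
      · exact Or.inr (fin2_one _ h)
    rcases hx1 with h | h
    · rw [if_pos h]
      have he : (B.filter fun y => ¬ x = y ∧ x.1 = y.1) = (B.filter fun p => p.1 = 0).erase x := by
        ext y
        simp only [Finset.mem_filter, Finset.mem_erase]
        constructor
        · rintro ⟨hyB, hne, heq⟩
          exact ⟨fun hyx => hne hyx.symm, hyB, by rw [← heq, h]⟩
        · rintro ⟨hne, hyB, hy0⟩
          exact ⟨hyB, fun hxy => hne hxy.symm, by rw [h, hy0]⟩
      rw [he, Finset.card_erase_of_mem (Finset.mem_filter.mpr ⟨hxB, h⟩)]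
    · rw [if_neg (by rw [h]; decide)]
      have he : (B.filter fun y => ¬ x = y ∧ x.1 = y.1) = (B.filter fun p => p.1 = 1).erase x := by
        ext y
        simp only [Finset.mem_filter, Finset.mem_erase]
        constructor
        · rintro ⟨hyB, hne, heq⟩
          exact ⟨fun hyx => hne hyx.symm, hyB, by rw [← heq, h]⟩
        · rintro ⟨hne, hyB, hy0⟩
          exact ⟨hyB, fun hxy => hne hxy.symm, by rw [h, hy0]⟩
      rw [he, Finset.card_erase_of_mem (Finset.mem_filter.mpr ⟨hxB, h⟩)]
  rw [Finset.sum_congr rfl key, Finset.sum_ite, Finset.sum_const, Finset.sum_const,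
    smul_eq_mul, smul_eq_mul, hnot]

lemma univ_card0 {n : ℕ} :
    ((Finset.univ : Finset (Fin 2 × Fin n)).filter fun p => p.1 = 0).card = n := by
  rw [Finset.card_filter, Fintype.sum_prod_type]
  simp [Fin.sum_univ_two]

lemma univ_card1 {n : ℕ} :
    ((Finset.univ : Finset (Fin 2 × Fin n)).filter fun p => p.1 = 1).card = n := by
  rw [Finset.card_filter, Fintype.sum_prod_type]
  simp [Fin.sum_univ_two]


set_option maxHeartbeats 1000000 in
theorem stmt_16 (n l1 l2 : ℕ) (D : GDD n 6 l1 l2) (hc : D.HasConfig 1 5) :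
    2 * n * l2 = l1 * (n - 1) := by
  classical
  set b := Multiset.card D.blocks with hb
  -- cross-pair double count
  set s : Finset ((Fin 2 × Fin n) × (Fin 2 × Fin n)) :=
    Finset.univ.filter (fun p => ¬ p.1.1 = p.2.1) with hs
  have step1 : ∀ p ∈ s, (D.blocks.filter fun B => p.1 ∈ B ∧ p.2 ∈ B).card = l2 := by
    intro p hp
    exact D.crossPairs p.1 p.2 (Finset.mem_filter.mp hp).2
  have lhs1 : ∑ p ∈ s, (D.blocks.filter fun B => p.1 ∈ B ∧ p.2 ∈ B).card = s.card * l2 := by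
    rw [Finset.sum_congr rfl step1, Finset.sum_const, smul_eq_mul]
  have scard : s.card = n * n + n * n := by
    have h : s.card = ∑ x : Fin 2 × Fin n, (Finset.univ.filter fun y : Fin 2 × Fin n => ¬ x.1 = y.1).card :=
      card_filter_pairs (fun x y : Fin 2 × Fin n => ¬ x.1 = y.1)
    rw [h, cross_count, univ_card0, univ_card1]
  have per : ∀ B ∈ D.blocks, (s.filter fun p => p.1 ∈ B ∧ p.2 ∈ B).card = 10 := by
    intro B hB
    have h2 : ((Finset.univ.filter (fun p : (Fin 2 × Fin n) × (Fin 2 × Fin n) =>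
        (¬ p.1.1 = p.2.1) ∧ p.1 ∈ B ∧ p.2 ∈ B))).card
        = ∑ x ∈ B, (B.filter fun y => ¬ x.1 = y.1).card :=
      pairs_in_block (fun x y : Fin 2 × Fin n => ¬ x.1 = y.1) B
    rw [hs, Finset.filter_filter, h2, cross_count]
    rcases hc B hB with ⟨h0, h1⟩ | ⟨h0, h1⟩ <;> rw [h0, h1]
  have big := sum_filter_card_s16 D.blocks s (fun p B => p.1 ∈ B ∧ p.2 ∈ B)
  have mapsum : (D.blocks.map fun B => (s.filter fun p => p.1 ∈ B ∧ p.2 ∈ B).card).sum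
      = 10 * b := by
    rw [Multiset.map_congr rfl per, Multiset.map_const', Multiset.sum_replicate, smul_eq_mul, hb]
    exact Nat.mul_comm _ _
  have e1 : (n * n + n * n) * l2 = 10 * b := by
    rw [← scard]
    exact lhs1.symm.trans (big.trans mapsum)
  -- same-pair double count
  set t : Finset ((Fin 2 × Fin n) × (Fin 2 × Fin n)) :=
    Finset.univ.filter (fun p => ¬ p.1 = p.2 ∧ p.1.1 = p.2.1) with ht
  have step2 : ∀ p ∈ t, (D.blocks.filter fun B => p.1 ∈ B ∧ p.2 ∈ B).card = l1 := by
    intro p hp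
    exact D.samePairs p.1 p.2 (Finset.mem_filter.mp hp).2.1 (Finset.mem_filter.mp hp).2.2
  have lhs2 : ∑ p ∈ t, (D.blocks.filter fun B => p.1 ∈ B ∧ p.2 ∈ B).card = t.card * l1 := by
    rw [Finset.sum_congr rfl step2, Finset.sum_const, smul_eq_mul]
  have tcard : t.card = n * (n - 1) + n * (n - 1) := by
    have h : t.card = ∑ x : Fin 2 × Fin n,
        (Finset.univ.filter fun y : Fin 2 × Fin n => ¬ x = y ∧ x.1 = y.1).card :=
      card_filter_pairs (fun x y : Fin 2 × Fin n => ¬ x = y ∧ x.1 = y.1)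
    rw [h, same_count, univ_card0, univ_card1]
  have per2 : ∀ B ∈ D.blocks, (t.filter fun p => p.1 ∈ B ∧ p.2 ∈ B).card = 20 := by
    intro B hB
    have h2 : ((Finset.univ.filter (fun p : (Fin 2 × Fin n) × (Fin 2 × Fin n) =>
        (¬ p.1 = p.2 ∧ p.1.1 = p.2.1) ∧ p.1 ∈ B ∧ p.2 ∈ B))).card
        = ∑ x ∈ B, (B.filter fun y => ¬ x = y ∧ x.1 = y.1).card :=
      pairs_in_block (fun x y : Fin 2 × Fin n => ¬ x = y ∧ x.1 = y.1) B
    rw [ht, Finset.filter_filter, h2, same_count]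
    rcases hc B hB with ⟨h0, h1⟩ | ⟨h0, h1⟩ <;> rw [h0, h1]
  have big2 := sum_filter_card_s16 D.blocks t (fun p B => p.1 ∈ B ∧ p.2 ∈ B)
  have mapsum2 : (D.blocks.map fun B => (t.filter fun p => p.1 ∈ B ∧ p.2 ∈ B).card).sum
      = 20 * b := by
    rw [Multiset.map_congr rfl per2, Multiset.map_const', Multiset.sum_replicate, smul_eq_mul, hb]
    exact Nat.mul_comm _ _
  have e2 : (n * (n - 1) + n * (n - 1)) * l1 = 20 * b := by
    rw [← tcard]
    exact lhs2.symm.trans (big2.trans mapsum2)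
  -- combine
  rcases Nat.eq_zero_or_pos n with h0 | hpos
  · subst h0; simp
  · have key : (2 * n) * (2 * n * l2) = (2 * n) * (l1 * (n - 1)) := by
      have t1 : (2 * n) * (2 * n * l2) = 2 * ((n * n + n * n) * l2) := by ring
      have t2 : (2 * n) * (l1 * (n - 1)) = (n * (n - 1) + n * (n - 1)) * l1 := by ring
      rw [t1, e1, t2, e2]
      ring
    exact Nat.eq_of_mul_eq_mul_left (by omega) key
end

section
/- The existence of a BIBD(n,k,Λ) implies the existence of a configuration (1,k) GDD(n,2,k+1;λ₁,λ₂) with λ₁ = Λn and λ₂ = 2Λ(n−1)/(k−1). -/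
/-!
Take a copy of the BIBD on each group and, for every block `B` on one group and every point `z`
of the other group, the block `B ∪ {z}`. Two points of one group lie together exactly in the
blocks coming from a base block containing both, once for each of the `n` choices of `z`, hence
`λ n` times. A cross pair `(a, c)` is covered once for each base block through `a` (with
`z = c`) and once for each base block through `c` (with `z = a`), hence `2 r` times, where the
replication number `r` satisfies `r (k - 1) = λ (n - 1)` by double counting. When `k ≤ 1` no
block contains a pair, so `λ n = 0` whenever a group has two points and the empty design works.
-/

open Finset

lemma Multiset.card_filter_bind {α β : Type*} (s : Multiset α) (f : α → Multiset β)
    (p : β → Prop) [DecidablePred p] :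
    ((s.bind f).filter p).card = (s.map fun a => ((f a).filter p).card).sum := by
  rw [Multiset.filter_bind, Multiset.card_bind]
  rfl

lemma Multiset.sum_map_ite_const {α : Type*} (s : Multiset α) (p : α → Prop) [DecidablePred p]
    (c : ℕ) : (s.map fun a => if p a then c else 0).sum = (s.filter p).card * c := by
  induction s using Multiset.induction with
  | empty => simp
  | cons a s ih => by_cases h : p a <;> simp [h, ih, add_mul, add_comm]

lemma Fin.two_eq_add_one_iff_ne {a b : Fin 2} : a = b + 1 ↔ a ≠ b := by
  revert a b
  decide

lemma Fin.two_eq_of_ne_of_ne {a b c : Fin 2} (hab : a ≠ b) (hca : c ≠ a) : c = b := by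
  revert a b c
  decide

section Doubling

variable {n : ℕ}

def adjoinBlock (B : Finset (Fin n)) (z : Fin 2 × Fin n) : Finset (Fin 2 × Fin n) :=
  insert z (B.map (Function.Embedding.sectR (z.1 + 1) (Fin n)))

lemma mem_adjoinBlock {B : Finset (Fin n)} {z x : Fin 2 × Fin n} :
    x ∈ adjoinBlock B z ↔ x = z ∨ (x.1 ≠ z.1 ∧ x.2 ∈ B) := by
  obtain ⟨g, a⟩ := x
  simp [adjoinBlock, Fin.two_eq_add_one_iff_ne, and_comm, eq_comm]

lemma card_adjoinBlock (B : Finset (Fin n)) (z : Fin 2 × Fin n) :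
    (adjoinBlock B z).card = B.card + 1 := by
  rw [adjoinBlock, card_insert_of_notMem, card_map]
  simp [Prod.ext_iff]

lemma card_filter_fst_adjoinBlock (B : Finset (Fin n)) (z : Fin 2 × Fin n) (g : Fin 2) :
    ((adjoinBlock B z).filter fun p => p.1 = g).card = if g = z.1 then 1 else B.card := by
  obtain ⟨h, y⟩ := z
  fin_cases g <;> fin_cases h <;> simp [adjoinBlock, filter_insert, filter_map]

lemma card_filter_fst_ne_and (g : Fin 2) (c : Prop) [Decidable c] :
    #{z : Fin 2 × Fin n | z.1 ≠ g ∧ c} = if c then n else 0 := by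
  split_ifs with hc
  · fin_cases g <;> simp [hc, card_filter, Fintype.sum_prod_type]
  · simp [hc]

lemma card_filter_mem_adjoinBlock (B : Finset (Fin n)) (x : Fin 2 × Fin n) :
    #{z | x ∈ adjoinBlock B z} = 1 + if x.2 ∈ B then n else 0 := by
  simp_rw [mem_adjoinBlock, filter_or]
  rw [card_union_of_disjoint, filter_eq, if_pos (mem_univ x), card_singleton]
  · simp_rw [ne_comm (a := x.1)]
    rw [card_filter_fst_ne_and]
  · rw [disjoint_filter]
    rintro z - rfl ⟨h, -⟩
    exact h rfl

lemma card_filter_mem_adjoinBlock_of_fst_eq (B : Finset (Fin n)) {x x' : Fin 2 × Fin n}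
    (hne : x ≠ x') (hfst : x.1 = x'.1) :
    #{z | x ∈ adjoinBlock B z ∧ x' ∈ adjoinBlock B z} = if x.2 ∈ B ∧ x'.2 ∈ B then n else 0 := by
  rw [← card_filter_fst_ne_and x.1]
  congr 1
  ext z
  simp only [mem_filter, mem_univ, true_and, mem_adjoinBlock]
  grind

lemma card_filter_mem_adjoinBlock_of_fst_ne (B : Finset (Fin n)) {x x' : Fin 2 × Fin n}
    (hfst : x.1 ≠ x'.1) :
    #{z | x ∈ adjoinBlock B z ∧ x' ∈ adjoinBlock B z} =
      (if x.2 ∈ B then 1 else 0) + if x'.2 ∈ B then 1 else 0 := by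
  have hz : ∀ z, x ∈ adjoinBlock B z ∧ x' ∈ adjoinBlock B z ↔
      (z = x' ∧ x.2 ∈ B) ∨ (z = x ∧ x'.2 ∈ B) := by
    intro z
    simp only [mem_adjoinBlock]
    have := @Fin.two_eq_of_ne_of_ne x.1 x'.1 z.1 hfst
    grind
  simp_rw [hz, filter_or]
  rw [card_union_of_disjoint]
  · congr 1 <;> split_ifs <;> simp [*, filter_eq']
  · rw [disjoint_filter]
    rintro z - ⟨rfl, -⟩ ⟨rfl, -⟩
    exact hfst rfl

end Doubling

namespace BIBD

variable {n k lam : ℕ}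

lemma card_filter_mem_mul_sub_one (D : BIBD n k lam) (x : Fin n) :
    (D.blocks.filter (x ∈ ·)).card * (k - 1) = lam * (n - 1) := by
  have hblock : ∀ B ∈ D.blocks,
      ∑ y ∈ univ.erase x, (if x ∈ B ∧ y ∈ B then 1 else 0) = if x ∈ B then k - 1 else 0 := by
    intro B hB
    split_ifs with hx
    · rw [sum_boole, Nat.cast_id, ← D.blockCard B hB, ← card_erase_of_mem hx]
      congr 1
      ext y
      simp [hx, and_comm]
    · simp [hx]
  calc (D.blocks.filter (x ∈ ·)).card * (k - 1)
      = (D.blocks.map fun B => ∑ y ∈ univ.erase x, if x ∈ B ∧ y ∈ B then 1 else 0).sum := by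
        rw [Multiset.map_congr rfl hblock, Multiset.sum_map_ite_const]
    _ = ∑ y ∈ univ.erase x, (D.blocks.filter fun B => x ∈ B ∧ y ∈ B).card := by
        have hcount : ∀ y, (D.blocks.filter fun B => x ∈ B ∧ y ∈ B).card
            = (D.blocks.map fun B => if x ∈ B ∧ y ∈ B then 1 else 0).sum := fun y => by
          rw [Multiset.sum_map_ite_const, mul_one]
        simp_rw [hcount, sum_eq_multiset_sum]
        exact Multiset.sum_map_sum_map _ _
    _ = lam * (n - 1) := by
        rw [sum_congr rfl fun y hy => D.pairs x y (ne_of_mem_erase hy).symm]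
        simp [mul_comm]

lemma lam_eq_zero_of_le_one (D : BIBD n k lam) (hk : k ≤ 1) {x y : Fin n} (hxy : x ≠ y) :
    lam = 0 := by
  rw [← D.pairs x y hxy, Multiset.card_eq_zero, Multiset.filter_eq_nil]
  rintro B hB ⟨hx, hy⟩
  have := card_le_card (insert_subset hx (singleton_subset_iff.2 hy))
  rw [card_pair hxy, D.blockCard B hB] at this
  omega

lemma exists_hasConfig_of_le_one (D : BIBD n k lam) (hk : k ≤ 1) :
    ∃ G : GDD n (k + 1) (lam * n) 0, G.HasConfig 1 k := by
  refine ⟨⟨0, by simp, 0, by simp, fun x y hxy hfst => ?_, by simp⟩, by simp [GDD.HasConfig]⟩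
  rw [D.lam_eq_zero_of_le_one hk fun h => hxy (Prod.ext hfst h)]
  simp

def doubledBlocks (D : BIBD n k lam) : Multiset (Finset (Fin 2 × Fin n)) :=
  D.blocks.bind fun B => (univ : Finset (Fin 2 × Fin n)).val.map (adjoinBlock B)

lemma mem_doubledBlocks {D : BIBD n k lam} {C : Finset (Fin 2 × Fin n)} :
    C ∈ D.doubledBlocks ↔ ∃ B ∈ D.blocks, ∃ z, adjoinBlock B z = C := by
  simp only [doubledBlocks, Multiset.mem_bind, Multiset.mem_map, Finset.mem_val, mem_univ,
    true_and]

lemma card_filter_doubledBlocks (D : BIBD n k lam) (p : Finset (Fin 2 × Fin n) → Prop)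
    [DecidablePred p] :
    (D.doubledBlocks.filter p).card = (D.blocks.map fun B => #{z | p (adjoinBlock B z)}).sum := by
  rw [doubledBlocks, Multiset.card_filter_bind]
  simp_rw [← Multiset.countP_eq_card_filter, Multiset.countP_map]
  rfl

def doubledGDD (D : BIBD n k lam) (r : ℕ) (hr : ∀ x, (D.blocks.filter (x ∈ ·)).card = r) :
    GDD n (k + 1) (lam * n) (2 * r) where
  blocks := D.doubledBlocks
  blockCard B hB := by
    obtain ⟨B, hBD, z, rfl⟩ := mem_doubledBlocks.1 hB
    rw [card_adjoinBlock, D.blockCard B hBD]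
  rep := Multiset.card D.blocks + r * n
  pointRep x := by
    simp_rw [card_filter_doubledBlocks, card_filter_mem_adjoinBlock, Multiset.sum_map_add,
      Multiset.sum_map_ite_const, hr]
    simp
  samePairs x y hxy hfst := by
    rw [card_filter_doubledBlocks]
    simp_rw [card_filter_mem_adjoinBlock_of_fst_eq _ hxy hfst]
    rw [Multiset.sum_map_ite_const, D.pairs _ _ fun h => hxy (Prod.ext hfst h)]
  crossPairs x y hfst := by
    simp_rw [card_filter_doubledBlocks, card_filter_mem_adjoinBlock_of_fst_ne _ hfst,
      Multiset.sum_map_add, Multiset.sum_map_ite_const, hr]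
    ring

lemma doubledGDD_hasConfig (D : BIBD n k lam) (r : ℕ)
    (hr : ∀ x, (D.blocks.filter (x ∈ ·)).card = r) : (D.doubledGDD r hr).HasConfig 1 k := by
  intro B hB
  obtain ⟨B, hBD, z, rfl⟩ := mem_doubledBlocks.1 hB
  simp_rw [card_filter_fst_adjoinBlock, D.blockCard B hBD]
  obtain ⟨g, y⟩ := z
  fin_cases g <;> simp

end BIBD

theorem stmt_17 (n k lam : ℕ) (D : BIBD n k lam) :
    ∃ G : GDD n (k + 1) (lam * n) (2 * lam * (n - 1) / (k - 1)), G.HasConfig 1 k := by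
  rcases le_or_gt k 1 with hk | hk
  · rw [Nat.sub_eq_zero_of_le hk, Nat.div_zero]
    exact D.exists_hasConfig_of_le_one hk
  have hdvd : k - 1 ∣ lam * (n - 1) := by
    rcases n with _ | n
    · simp
    · exact Dvd.intro_left _ (D.card_filter_mem_mul_sub_one 0)
  have hr : ∀ x, (D.blocks.filter (x ∈ ·)).card = lam * (n - 1) / (k - 1) := fun x =>
    (Nat.div_eq_of_eq_mul_left (by omega) (D.card_filter_mem_mul_sub_one x).symm).symm
  rw [mul_assoc, Nat.mul_div_assoc _ hdvd]
  exact ⟨D.doubledGDD _ hr, D.doubledGDD_hasConfig _ hr⟩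
end

section
/- The minimal indices for a configuration (3,3) GDD(n,2,6;λ₁,λ₂) when n ≡ 5 (mod 6) are (λ₁,λ₂) = (3n, 9(n−1)/2): any configuration (3,3) GDD(n,2,6;λ₁,λ₂) with n ≡ 5 (mod 6) has λ₁ a positive multiple of 3n and λ₂ the corresponding multiple of 9(n−1)/2. -/
/-! Let `r` be the replication number and `b` the number of blocks, and fix a point `x`.
Counting incidences gives `2n·r = 6b`, and counting the blocks through `x`
and a second point `y` gives `(n-1)λ₁ = 2r` when `y` ranges over the group of `x` and
`nλ₂ = 3r` when it ranges over the other group. Hence `3(n-1)λ₁ = 2nλ₂` and `n²λ₂ = 9b`.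
As `3 ∤ n`, `9 ∣ λ₂`; then `3n ∣ λ₁` because `n ≡ 5 (mod 6)` makes `3n` coprime to `n - 1`. -/

theorem Multiset.sum_card_filter_and_mem {α : Type*} [DecidableEq α] (M : Multiset (Finset α))
    (p : Finset α → Prop) [DecidablePred p] (S : Finset α) (c : ℕ)
    (hS : ∀ B ∈ M, p B → (S.filter (· ∈ B)).card = c) :
    ∑ y ∈ S, Multiset.card (M.filter fun B => p B ∧ y ∈ B) =
      c * Multiset.card (M.filter p) := by
  induction M using Multiset.induction_on with
  | empty => simp
  | cons a M ih =>
    have ih := ih fun B hB => hS B (Multiset.mem_cons_of_mem hB)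
    simp only [Multiset.filter_cons, Multiset.card_add, apply_ite Multiset.card,
      Multiset.card_singleton, Multiset.card_zero, Finset.sum_add_distrib, ih]
    by_cases ha : p a
    · simp [ha, ← hS a (Multiset.mem_cons_self a M) ha, Finset.card_filter, mul_add, add_comm]
    · simp [ha]

theorem Finset.card_filter_fst_eq {α β : Type*} [Fintype α] [DecidableEq α] [Fintype β]
    (i : α) : (Finset.univ.filter fun y : α × β => y.1 = i).card = Fintype.card β := by
  rw [← Finset.univ_product_univ, Finset.filter_product_left (· = i), Finset.card_product]
  simp [Finset.filter_eq']

theorem exists_eq_three_mul_mul_of_mod_six_eq_five {n l1 l2 : ℕ} (hn : n % 6 = 5)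
    (h : 3 * ((n - 1) * l1) = 2 * (n * l2)) (h9 : 9 ∣ n ^ 2 * l2) :
    ∃ w, l1 = 3 * n * w ∧ 2 * l2 = 9 * (n - 1) * w := by
  have h3n : Nat.Coprime 3 n := by
    rw [Nat.Prime.coprime_iff_not_dvd Nat.prime_three]; omega
  obtain ⟨m, rfl⟩ : 9 ∣ l2 := (Nat.Coprime.pow 2 2 h3n).dvd_of_dvd_mul_left h9
  have hl1 : (n - 1) * l1 = 3 * n * (2 * m) := by linarith
  have hcop : Nat.Coprime (3 * n) (n - 1) := by
    refine Nat.Coprime.mul_left ?_ ?_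
    · rw [Nat.Prime.coprime_iff_not_dvd Nat.prime_three]; omega
    · exact (Nat.coprime_self_sub_right (by omega)).mpr (Nat.coprime_one_right n)
  obtain ⟨w, rfl⟩ : 3 * n ∣ l1 := hcop.dvd_of_dvd_mul_left ⟨2 * m, hl1⟩
  have hw : (n - 1) * w = 2 * m :=
    Nat.eq_of_mul_eq_mul_left (by omega : 0 < 3 * n) (by linarith)
  exact ⟨w, rfl, by linarith⟩

namespace GDD

variable {n k l1 l2 : ℕ}

theorem two_mul_mul_rep_eq (D : GDD n k l1 l2) :
    2 * n * D.rep = k * Multiset.card D.blocks := by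
  have h := D.blocks.sum_card_filter_and_mem (fun _ => True) Finset.univ k
    fun B hB _ => by simpa using D.blockCard B hB
  simpa [D.pointRep, Multiset.filter_true] using h

variable {s : ℕ} {D : GDD n k l1 l2}

theorem HasConfig.card_filter_fst (hc : D.HasConfig s s)
    {B : Finset (Fin 2 × Fin n)} (hB : B ∈ D.blocks) (i : Fin 2) :
    (B.filter fun p => p.1 = i).card = s := by
  fin_cases i <;> rcases hc B hB with h | h <;> simp [h.1, h.2]

theorem HasConfig.sub_one_mul_l1_eq (hc : D.HasConfig s s) (x : Fin 2 × Fin n) :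
    (n - 1) * l1 = (s - 1) * D.rep := by
  set S := (Finset.univ.filter fun y : Fin 2 × Fin n => y.1 = x.1).erase x
  have h := D.blocks.sum_card_filter_and_mem (x ∈ ·) S (s - 1) fun B hB hxB => by
    have : S.filter (· ∈ B) = (B.filter fun p => p.1 = x.1).erase x := by
      ext y
      simp only [Finset.mem_filter, Finset.mem_erase, Finset.mem_univ, true_and, S]
      tauto
    rw [this, Finset.card_erase_of_mem (by simpa using hxB), hc.card_filter_fst hB]
  have hpairs : ∀ y ∈ S, Multiset.card (D.blocks.filter fun B => x ∈ B ∧ y ∈ B) = l1 := by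
    intro y hy
    obtain ⟨hyx, hy1⟩ : y ≠ x ∧ y.1 = x.1 := by simpa [S] using hy
    exact D.samePairs x y hyx.symm hy1.symm
  have hS : S.card = n - 1 := by
    rw [Finset.card_erase_of_mem (by simp), Finset.card_filter_fst_eq, Fintype.card_fin]
  rwa [Finset.sum_congr rfl hpairs, Finset.sum_const, hS, smul_eq_mul, D.pointRep] at h

theorem HasConfig.mul_l2_eq (hc : D.HasConfig s s) (x : Fin 2 × Fin n) {i : Fin 2}
    (hi : i ≠ x.1) : n * l2 = s * D.rep := by
  set S := Finset.univ.filter fun y : Fin 2 × Fin n => y.1 = i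
  have h := D.blocks.sum_card_filter_and_mem (x ∈ ·) S s fun B hB hxB => by
    have : S.filter (· ∈ B) = B.filter fun p => p.1 = i := by
      ext y
      simp only [Finset.mem_filter, Finset.mem_univ, true_and, S]
      tauto
    rw [this, hc.card_filter_fst hB]
  have hpairs : ∀ y ∈ S, Multiset.card (D.blocks.filter fun B => x ∈ B ∧ y ∈ B) = l2 := by
    intro y hy
    have hy1 : y.1 = i := by simpa [S] using hy
    exact D.crossPairs x y (hy1 ▸ hi.symm)
  rwa [Finset.sum_congr rfl hpairs, Finset.sum_const, Finset.card_filter_fst_eq,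
    Fintype.card_fin, smul_eq_mul, D.pointRep] at h

end GDD

theorem stmt_18 (n l1 l2 : ℕ) (hn : n % 6 = 5) (hl : 0 < l1)
    (D : GDD n 6 l1 l2) (hc : D.HasConfig 3 3) :
    ∃ w : ℕ, 0 < w ∧ l1 = 3 * n * w ∧ 2 * l2 = 9 * (n - 1) * w := by
  let x : Fin 2 × Fin n := (0, ⟨0, by omega⟩)
  have hb := D.two_mul_mul_rep_eq
  have h1 := hc.sub_one_mul_l1_eq x
  have h2 := hc.mul_l2_eq x (i := 1) one_ne_zero
  obtain ⟨w, hl1, hl2⟩ := exists_eq_three_mul_mul_of_mod_six_eq_five (l1 := l1) (l2 := l2) hn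
    (by linarith) ⟨Multiset.card D.blocks, by nlinarith⟩
  exact ⟨w, Nat.pos_of_ne_zero (by rintro rfl; omega), hl1, hl2⟩
end
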